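/- arXiv:2512.24352 — 7 statements merged into one kernel-verified Lean document; each statement's English description precedes it below -/
import Mathlib

section
/- Let X_1, X_2, ... be i.i.d. with distribution function F whose survival function F̄ is regularly varying of index -α, α > 0. Let a_n = F^{←}(1 - 1/n), X_{(n)} = max_{i≤n} X_i, and Z_n = (X_{(n)}/a_n)^{α/log n}. Then for every x ≥ 1, limsup_{n→∞} (1/log n) log P(Z_n > x) ≤ -log x. -/
/-!
Write `G = 1 - F`, `t_n = a_n x^(log n / α)` and `M_n = max_{i<n} X_i`. The event `Z_n > x`
contains `{X_0 > t_n}` and is contained in `{M_n > t_n} ∪ {M_n ≤ 0}`, so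
`G(t_n) ≤ P(Z_n > x) ≤ n G(t_n) + F(0)^n`.
Regular variation gives `G(2u)/G(u) → 2^(-α)`; iterating the resulting doubling inequalities
yields the Potter bounds `G(t) ≤ 2^γ (t/s)^(-γ) G(s)` for `γ < α` and
`G(t) ≥ 2^(-γ) (t/s)^(-γ) G(s)` for `γ > α`, for all large `s ≤ t`. Since
`t_n / a_n = x^(log n / α)` and `G(a_n) ≤ 1/n` by right continuity of `F`, the upper bound gives
`P(Z_n > x) = O(n^(-γ log x / α))` for every `γ < α`, the term `F(0)^n` being geometrically small.
The lower bound, with `G(a_n / 2) > 1/n`, shows that `P(Z_n > x)` decays at most polynomially;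
this keeps `log P(Z_n > x) / log n` bounded below, without which `limsup` would take its junk
value.
-/

open Filter MeasureTheory ProbabilityTheory
open Real Topology

section Potter

variable {G : ℝ → ℝ} {γ s t : ℝ}

lemma apply_two_pow_mul_le_of_doubling (hs : 0 ≤ s)
    (hstep : ∀ u ≥ s, G (2 * u) ≤ 2 ^ (-γ) * G u) (k : ℕ) :
    G (2 ^ k * s) ≤ ((2 : ℝ) ^ k) ^ (-γ) * G s := by
  induction k with
  | zero => simp
  | succ k ih =>
    calc G (2 ^ (k + 1) * s) = G (2 * (2 ^ k * s)) := by ring_nf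
      _ ≤ 2 ^ (-γ) * G (2 ^ k * s) := hstep _ (le_mul_of_one_le_left hs (one_le_pow₀ one_le_two))
      _ ≤ 2 ^ (-γ) * (((2 : ℝ) ^ k) ^ (-γ) * G s) := by gcongr
      _ = ((2 : ℝ) ^ (k + 1)) ^ (-γ) * G s := by
        rw [pow_succ', mul_rpow zero_le_two (by positivity), mul_assoc]

lemma le_apply_two_pow_mul_of_doubling (hs : 0 ≤ s)
    (hstep : ∀ u ≥ s, 2 ^ (-γ) * G u ≤ G (2 * u)) (k : ℕ) :
    ((2 : ℝ) ^ k) ^ (-γ) * G s ≤ G (2 ^ k * s) := by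
  induction k with
  | zero => simp
  | succ k ih =>
    calc ((2 : ℝ) ^ (k + 1)) ^ (-γ) * G s = 2 ^ (-γ) * (((2 : ℝ) ^ k) ^ (-γ) * G s) := by
          rw [pow_succ', mul_rpow zero_le_two (by positivity), mul_assoc]
      _ ≤ 2 ^ (-γ) * G (2 ^ k * s) := by gcongr
      _ ≤ G (2 * (2 ^ k * s)) := hstep _ (le_mul_of_one_le_left hs (one_le_pow₀ one_le_two))
      _ = G (2 ^ (k + 1) * s) := by ring_nf

theorem apply_le_mul_rpow_of_doubling (hG : Antitone G) (hGs : 0 ≤ G s) (hγ : 0 ≤ γ) (hs : 0 < s)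
    (hstep : ∀ u ≥ s, G (2 * u) ≤ 2 ^ (-γ) * G u) (hst : s ≤ t) :
    G t ≤ 2 ^ γ * (t / s) ^ (-γ) * G s := by
  have hts : 1 ≤ t / s := (one_le_div hs).2 hst
  obtain ⟨k, hk, hk'⟩ := exists_nat_pow_near hts one_lt_two
  calc G t ≤ G (2 ^ k * s) := hG ((le_div_iff₀ hs).1 hk)
    _ ≤ ((2 : ℝ) ^ k) ^ (-γ) * G s := apply_two_pow_mul_le_of_doubling hs.le hstep k
    _ = 2 ^ γ * ((2 : ℝ) ^ (k + 1)) ^ (-γ) * G s := by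
      rw [pow_succ, mul_rpow (by positivity) zero_le_two, rpow_neg zero_le_two]
      field_simp
    _ ≤ 2 ^ γ * (t / s) ^ (-γ) * G s := by
      have := rpow_le_rpow_of_nonpos (zero_lt_one.trans_le hts) hk'.le (neg_nonpos.2 hγ)
      gcongr

theorem mul_rpow_le_apply_of_doubling (hG : Antitone G) (hGs : 0 ≤ G s) (hγ : 0 ≤ γ) (hs : 0 < s)
    (hstep : ∀ u ≥ s, 2 ^ (-γ) * G u ≤ G (2 * u)) (hst : s ≤ t) :
    2 ^ (-γ) * (t / s) ^ (-γ) * G s ≤ G t := by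
  obtain ⟨k, hk, hk'⟩ := exists_nat_pow_near ((one_le_div hs).2 hst) one_lt_two
  calc 2 ^ (-γ) * (t / s) ^ (-γ) * G s ≤ 2 ^ (-γ) * ((2 : ℝ) ^ k) ^ (-γ) * G s := by
        have := rpow_le_rpow_of_nonpos (by positivity) hk (neg_nonpos.2 hγ)
        gcongr
    _ = ((2 : ℝ) ^ (k + 1)) ^ (-γ) * G s := by rw [pow_succ', mul_rpow zero_le_two (by positivity)]
    _ ≤ G (2 ^ (k + 1) * s) := le_apply_two_pow_mul_of_doubling hs.le hstep (k + 1)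
    _ ≤ G t := hG ((div_le_iff₀ hs).1 hk'.le)

lemma eventually_doubling_le {r r' : ℝ} (hratio : Tendsto (fun u => G (2 * u) / G u) atTop (𝓝 r))
    (hpos : ∀ᶠ u in atTop, 0 < G u) (h : r < r') : ∀ᶠ u in atTop, G (2 * u) ≤ r' * G u := by
  filter_upwards [hratio.eventually_lt_const h, hpos] with u hu hGu
  exact ((div_lt_iff₀ hGu).1 hu).le

lemma eventually_le_doubling {r r' : ℝ} (hratio : Tendsto (fun u => G (2 * u) / G u) atTop (𝓝 r))
    (hpos : ∀ᶠ u in atTop, 0 < G u) (h : r' < r) : ∀ᶠ u in atTop, r' * G u ≤ G (2 * u) := by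
  filter_upwards [hratio.eventually_const_lt h, hpos] with u hu hGu
  exact ((lt_div_iff₀ hGu).1 hu).le

end Potter

lemma tendsto_div_of_eq_rpow_mul {G L : ℝ → ℝ} {α c : ℝ} (hc : 0 < c)
    (hGL : ∀ x > 0, G x = x ^ (-α) * L x) (hL_pos : ∀ x > 0, 0 < L x)
    (hL : Tendsto (fun x => L (c * x) / L x) atTop (𝓝 1)) :
    Tendsto (fun u => G (c * u) / G u) atTop (𝓝 (c ^ (-α))) := by
  have h := hL.const_mul (c ^ (-α))
  rw [mul_one] at h
  refine h.congr' ?_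
  filter_upwards [eventually_gt_atTop 0] with u hu
  have := (hL_pos u hu).ne'
  have := (rpow_pos_of_pos hu (-α)).ne'
  rw [hGL _ (mul_pos hc hu), hGL _ hu, mul_rpow hc.le hu.le]
  field_simp

lemma eventually_lt_one_sub_one_div {c : ℝ} (hc : c < 1) : ∀ᶠ n : ℕ in atTop, c < 1 - 1 / n := by
  have h : Tendsto (fun n : ℕ => 1 - 1 / (n : ℝ)) atTop (𝓝 1) := by
    simpa using tendsto_one_div_atTop_nhds_zero_nat.const_sub (1 : ℝ)
  exact h.eventually_const_lt hc

lemma eventually_exists_one_sub_one_div_le {g : ℝ → ℝ} (hg : Tendsto g atTop (𝓝 1)) :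
    ∀ᶠ n : ℕ in atTop, ∃ x, 1 - 1 / (n : ℝ) ≤ g x := by
  filter_upwards [eventually_gt_atTop 0] with n hn
  have : 1 - 1 / (n : ℝ) < 1 := sub_lt_self 1 (by positivity)
  exact ((hg.eventually_const_lt this).exists).imp fun _ => le_of_lt

noncomputable def genInv (f : ℝ → ℝ) (u : ℝ) : ℝ := sInf {x | u ≤ f x}

section GenInv

variable {f : StieltjesFunction ℝ} {u y : ℝ}

lemma le_genInv (hy : f y < u) (hne : ∃ x, u ≤ f x) : y ≤ genInv f u :=
  le_csInf hne fun _ hx => (f.mono.reflect_lt (hy.trans_le hx)).le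

lemma le_apply_genInv (hne : ∃ x, u ≤ f x) : u ≤ f (genInv f u) := by
  refine ge_of_tendsto ((f.right_continuous _).mono Set.Ioi_subset_Ici_self) ?_
  filter_upwards [self_mem_nhdsWithin] with x hx
  obtain ⟨z, hz, hzx⟩ := exists_lt_of_csInf_lt hne hx
  exact le_trans hz (f.mono hzx.le)

lemma apply_lt_of_lt_genInv {z : ℝ} (hy : f y < u) (hz : z < genInv f u) : f z < u := by
  by_contra! h
  have hbdd : BddBelow {x | u ≤ f x} := ⟨y, fun _ hx => (f.mono.reflect_lt (hy.trans_le hx)).le⟩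
  exact hz.not_ge (csInf_le hbdd h)

lemma tendsto_genInv_one_sub_one_div (hf1 : ∀ x, f x < 1) (hf : Tendsto f atTop (𝓝 1)) :
    Tendsto (fun n : ℕ => genInv f (1 - 1 / n)) atTop atTop := by
  refine tendsto_atTop.2 fun M => ?_
  filter_upwards [eventually_lt_one_sub_one_div (hf1 M), eventually_exists_one_sub_one_div_le hf]
    with n hM hne
  exact le_genInv hM hne

lemma eventually_one_sub_apply_genInv_le (hf : Tendsto f atTop (𝓝 1)) :
    ∀ᶠ n : ℕ in atTop, 1 - f (genInv f (1 - 1 / n)) ≤ 1 / n := by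
  filter_upwards [eventually_exists_one_sub_one_div_le hf] with n hne
  linarith [le_apply_genInv hne]

lemma eventually_le_one_sub_apply_half_genInv (hf1 : ∀ x, f x < 1) (hf : Tendsto f atTop (𝓝 1)) :
    ∀ᶠ n : ℕ in atTop, 1 / n ≤ 1 - f (genInv f (1 - 1 / n) / 2) := by
  filter_upwards [(tendsto_genInv_one_sub_one_div hf1 hf).eventually_gt_atTop 0,
    eventually_lt_one_sub_one_div (hf1 0)] with n hpos h0
  linarith [apply_lt_of_lt_genInv h0 (half_lt_self hpos)]

end GenInv

lemma eventually_pow_le_rpow_neg {q : ℝ} (hq0 : 0 ≤ q) (hq1 : q < 1) (b : ℝ) :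
    ∀ᶠ n : ℕ in atTop, q ^ n ≤ (n : ℝ) ^ (-b) := by
  have hlim := tendsto_pow_const_mul_const_pow_of_abs_lt_one ⌈b⌉₊ (abs_lt.2 ⟨by linarith, hq1⟩)
  filter_upwards [hlim.eventually_lt_const one_pos, eventually_ge_atTop 1] with n hlt hn
  have hn' : (1 : ℝ) ≤ n := by exact_mod_cast hn
  calc q ^ n ≤ ((n : ℝ) ^ ⌈b⌉₊)⁻¹ := by
        rw [← one_div, le_div_iff₀' (by positivity)]
        exact hlt.le
    _ = (n : ℝ) ^ (-(⌈b⌉₊ : ℝ)) := by rw [rpow_neg (by positivity), rpow_natCast]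
    _ ≤ (n : ℝ) ^ (-b) := rpow_le_rpow_of_exponent_le hn' (neg_le_neg (Nat.le_ceil b))

lemma log_mul_rpow_neg_div_log {c K x : ℝ} (hc : 0 < c) (hx : 1 < x) :
    log (c * x ^ (-K)) / log x = log c / log x - K := by
  have hlog := (log_pos hx).ne'
  rw [log_mul hc.ne' (rpow_pos_of_pos (by linarith) _).ne', log_rpow (by linarith)]
  field_simp
  ring

theorem limsup_log_div_log_le {P : ℕ → ℝ} {β : ℝ}
    (hlow : ∃ c > 0, ∃ K : ℝ, ∀ᶠ n : ℕ in atTop, c * (n : ℝ) ^ (-K) ≤ P n)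
    (hup : ∀ b < β, ∃ C, ∀ᶠ n : ℕ in atTop, P n ≤ C * (n : ℝ) ^ (-b)) :
    limsup (fun n : ℕ => log (P n) / log n) atTop ≤ -β := by
  have hlog : Tendsto (fun n : ℕ => log n) atTop atTop :=
    tendsto_log_atTop.comp tendsto_natCast_atTop_atTop
  have hvanish (A : ℝ) : Tendsto (fun n : ℕ => A / log n) atTop (𝓝 0) :=
    tendsto_const_nhds.div_atTop hlog
  have hn1 : ∀ᶠ n : ℕ in atTop, (1 : ℝ) < n :=
    tendsto_natCast_atTop_atTop.eventually_gt_atTop 1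
  obtain ⟨c, hc, K, hcK⟩ := hlow
  have hPpos : ∀ᶠ n : ℕ in atTop, 0 < P n := by
    filter_upwards [hcK, hn1] with n h hn
    exact (mul_pos hc (rpow_pos_of_pos (by linarith) _)).trans_le h
  have hcobdd : IsCoboundedUnder (· ≤ ·) atTop fun n : ℕ => log (P n) / log n := by
    refine isCoboundedUnder_le_of_eventually_le atTop (x := -1 - K) ?_
    filter_upwards [hcK, hn1, (hvanish (log c)).eventually_const_lt (neg_one_lt_zero)]
      with n h hn hA
    calc -1 - K ≤ log c / log n - K := by linarith
      _ = log (c * (n : ℝ) ^ (-K)) / log n := (log_mul_rpow_neg_div_log hc hn).symm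
      _ ≤ log (P n) / log n := by gcongr
  refine le_of_forall_gt_imp_ge_of_dense fun d hd => limsup_le_of_le hcobdd ?_
  obtain ⟨b, hdb, hbβ⟩ := exists_between (neg_lt.1 hd)
  obtain ⟨C, hC⟩ := hup b hbβ
  filter_upwards [hC, hPpos, hn1, (hvanish (log C)).eventually_lt_const (by linarith : 0 < d + b)]
    with n h hP hn hA
  have hCpos : 0 < C := pos_of_mul_pos_left (hP.trans_le h) (rpow_pos_of_pos (by linarith) _).le
  calc log (P n) / log n ≤ log (C * (n : ℝ) ^ (-b)) / log n := by gcongr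
    _ = log C / log n - b := log_mul_rpow_neg_div_log hCpos hn
    _ ≤ d := by linarith

lemma lt_rpow_div_iff {x M a p : ℝ} (hx : 0 ≤ x) (hM : 0 < M) (ha : 0 < a) (hp : 0 < p) :
    x < (M / a) ^ p ↔ a * x ^ p⁻¹ < M := by
  rw [← rpow_inv_lt_iff_of_pos hx (div_pos hM ha).le hp, lt_div_iff₀' ha]

section Maximum

variable {Ω : Type*} [MeasurableSpace Ω] {μ : Measure Ω} [IsProbabilityMeasure μ]
  {X : ℕ → Ω → ℝ} {n : ℕ}

lemma measureReal_lt_le_lt_iSup (hn : 0 < n) (t : ℝ) :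
    μ.real {ω | t < X 0 ω} ≤ μ.real {ω | t < ⨆ i : Fin n, X i ω} :=
  measureReal_mono fun ω (hω : t < X 0 ω) =>
    hω.trans_le (le_ciSup (Set.finite_range fun i : Fin n => X i ω).bddAbove ⟨0, hn⟩)

lemma measureReal_lt_iSup_le (hident : ∀ i, IdentDistrib (X i) (X 0) μ μ) (hn : 0 < n) (t : ℝ) :
    μ.real {ω | t < ⨆ i : Fin n, X i ω} ≤ n * μ.real {ω | t < X 0 ω} := by
  have : Nonempty (Fin n) := ⟨⟨0, hn⟩⟩
  have hX (i : ℕ) : μ.real {ω | t < X i ω} = μ.real {ω | t < X 0 ω} :=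
    congrArg ENNReal.toReal ((hident i).measure_mem_eq measurableSet_Ioi)
  calc μ.real {ω | t < ⨆ i : Fin n, X i ω} ≤ μ.real (⋃ i : Fin n, {ω | t < X i ω}) :=
        measureReal_mono fun _ hω =>
          Set.mem_iUnion.2 (exists_lt_of_lt_ciSup (f := fun i : Fin n => X i _) hω)
    _ ≤ ∑ i : Fin n, μ.real {ω | t < X i ω} := measureReal_iUnion_fintype_le _
    _ = n * μ.real {ω | t < X 0 ω} := by
      simp only [hX, Finset.sum_const, Finset.card_univ, Fintype.card_fin, nsmul_eq_mul]

lemma measureReal_iSup_le_le (hindep : iIndepFun X μ) (hident : ∀ i, IdentDistrib (X i) (X 0) μ μ)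
    (n : ℕ) (t : ℝ) : μ.real {ω | ⨆ i : Fin n, X i ω ≤ t} ≤ μ.real {ω | X 0 ω ≤ t} ^ n := by
  have hsub : {ω | ⨆ i : Fin n, X i ω ≤ t} ⊆ ⋂ i ∈ Finset.range n, X i ⁻¹' Set.Iic t := by
    intro ω (hω : ⨆ i : Fin n, X i ω ≤ t)
    simp only [Set.mem_iInter, Finset.mem_range]
    exact fun i hi => (le_ciSup (Set.finite_range fun i : Fin n => X i ω).bddAbove ⟨i, hi⟩).trans hω
  calc _ ≤ μ.real (⋂ i ∈ Finset.range n, X i ⁻¹' Set.Iic t) := measureReal_mono hsub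
    _ = μ.real {ω | X 0 ω ≤ t} ^ n := by
      rw [measureReal_def, hindep.meas_biInter fun i _ => ⟨Set.Iic t, measurableSet_Iic, rfl⟩,
        Finset.prod_congr rfl fun i _ => (hident i).measure_mem_eq measurableSet_Iic,
        Finset.prod_const, Finset.card_range, ENNReal.toReal_pow]
      rfl

variable {a p x : ℝ}

lemma measureReal_lt_le_lt_rpow_iSup (ha : 0 < a) (hp : 0 < p) (hx : 0 ≤ x) (hn : 0 < n) :
    μ.real {ω | a * x ^ p⁻¹ < X 0 ω} ≤ μ.real {ω | x < ((⨆ i : Fin n, X i ω) / a) ^ p} :=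
  (measureReal_lt_le_lt_iSup hn _).trans <| measureReal_mono fun _ hω =>
    (lt_rpow_div_iff hx ((by positivity : 0 ≤ a * x ^ p⁻¹).trans_lt hω) ha hp).2 hω

lemma measureReal_lt_rpow_iSup_le (hindep : iIndepFun X μ)
    (hident : ∀ i, IdentDistrib (X i) (X 0) μ μ) (ha : 0 < a) (hp : 0 < p) (hx : 0 ≤ x)
    (hn : 0 < n) :
    μ.real {ω | x < ((⨆ i : Fin n, X i ω) / a) ^ p} ≤
      n * μ.real {ω | a * x ^ p⁻¹ < X 0 ω} + μ.real {ω | X 0 ω ≤ 0} ^ n := by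
  have hsub : {ω | x < ((⨆ i : Fin n, X i ω) / a) ^ p} ⊆
      {ω | a * x ^ p⁻¹ < ⨆ i : Fin n, X i ω} ∪ {ω | ⨆ i : Fin n, X i ω ≤ 0} := by
    intro ω hω
    rcases le_or_gt (⨆ i : Fin n, X i ω) 0 with h | h
    · exact Or.inr h
    · exact Or.inl ((lt_rpow_div_iff hx h ha hp).1 hω)
  exact (measureReal_mono hsub).trans <| (measureReal_union_le _ _).trans <|
    add_le_add (measureReal_lt_iSup_le hident hn _) (measureReal_iSup_le_le hindep hident n 0)

end Maximum

section Tail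

variable {G : ℝ → ℝ} {α x : ℝ} {a P : ℕ → ℝ}

lemma rpow_log_div_rpow_neg_mul {y : ℝ} (hx : 0 < x) (hy : 0 < y) (hα : α ≠ 0) (c : ℝ) :
    (x ^ (log y / α)) ^ (-(c * α)) = y ^ (-(c * log x)) := by
  rw [← rpow_mul hx.le, rpow_def_of_pos hx, rpow_def_of_pos hy]
  field_simp

lemma exists_pos_lt_one_le_mul {b β : ℝ} (hβ : 0 ≤ β) (hb : b < β) :
    ∃ θ, 0 < θ ∧ θ < 1 ∧ b ≤ θ * β := by
  rcases hβ.eq_or_lt with rfl | hβ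
  · exact ⟨1 / 2, by norm_num, by norm_num, by linarith⟩
  · refine ⟨max (1 / 2) (b / β), by positivity, max_lt (by norm_num) ((div_lt_one hβ).2 hb), ?_⟩
    calc b = b / β * β := (div_mul_cancel₀ b hβ.ne').symm
      _ ≤ max (1 / 2) (b / β) * β := by gcongr; exact le_max_right _ _

theorem exists_tail_le_rpow (hα : 0 < α) (hx : 1 ≤ x) (hG : Antitone G) (hG0 : 0 ≤ G)
    (hpos : ∀ᶠ u in atTop, 0 < G u)
    (hratio : Tendsto (fun u => G (2 * u) / G u) atTop (𝓝 (2 ^ (-α))))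
    (ha : Tendsto a atTop atTop) (haG : ∀ᶠ n : ℕ in atTop, G (a n) ≤ 1 / n)
    {q : ℝ} (hq0 : 0 ≤ q) (hq1 : q < 1)
    (hP : ∀ᶠ n : ℕ in atTop, P n ≤ n * G (a n * x ^ (log n / α)) + q ^ n)
    {b : ℝ} (hb : b < log x) : ∃ C, ∀ᶠ n : ℕ in atTop, P n ≤ C * (n : ℝ) ^ (-b) := by
  obtain ⟨θ, hθ0, hθ1, hbθ⟩ := exists_pos_lt_one_le_mul (log_nonneg hx) hb
  have hdouble : ∀ᶠ u in atTop, ∀ v ≥ u, G (2 * v) ≤ 2 ^ (-(θ * α)) * G v :=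
    eventually_forall_ge_atTop.2 <| eventually_doubling_le hratio hpos <|
      rpow_lt_rpow_of_exponent_lt one_lt_two (by nlinarith)
  refine ⟨2 ^ (θ * α) + 1, ?_⟩
  filter_upwards [ha.eventually hdouble, ha.eventually_gt_atTop 0, haG, hP,
    eventually_pow_le_rpow_neg hq0 hq1 b, eventually_ge_atTop 1] with n hstep han hGa hPn hqn hn
  have hn' : (1 : ℝ) ≤ n := by exact_mod_cast hn
  have hw : 1 ≤ x ^ (log n / α) := one_le_rpow hx (div_nonneg (log_natCast_nonneg n) hα.le)
  have hpotter := apply_le_mul_rpow_of_doubling hG (hG0 _) (by positivity) han hstep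
    (le_mul_of_one_le_right han.le hw)
  rw [mul_div_cancel_left₀ _ han.ne',
    rpow_log_div_rpow_neg_mul (by linarith) (by linarith) hα.ne'] at hpotter
  calc P n ≤ n * G (a n * x ^ (log n / α)) + q ^ n := hPn
    _ ≤ n * (2 ^ (θ * α) * (n : ℝ) ^ (-(θ * log x)) * (1 / n)) + (n : ℝ) ^ (-b) := by
      gcongr
      exact hpotter.trans (by gcongr)
    _ = 2 ^ (θ * α) * (n : ℝ) ^ (-(θ * log x)) + (n : ℝ) ^ (-b) := by field_simp
    _ ≤ 2 ^ (θ * α) * (n : ℝ) ^ (-b) + (n : ℝ) ^ (-b) := by gcongr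
    _ = (2 ^ (θ * α) + 1) * (n : ℝ) ^ (-b) := by ring

theorem exists_rpow_le_tail (hα : 0 < α) (hx : 1 ≤ x) (hG : Antitone G) (hG0 : 0 ≤ G)
    (hpos : ∀ᶠ u in atTop, 0 < G u)
    (hratio : Tendsto (fun u => G (2 * u) / G u) atTop (𝓝 (2 ^ (-α))))
    (ha : Tendsto a atTop atTop) (haG : ∀ᶠ n : ℕ in atTop, 1 / n ≤ G (a n / 2))
    (hP : ∀ᶠ n : ℕ in atTop, G (a n * x ^ (log n / α)) ≤ P n) :
    ∃ c > 0, ∃ K : ℝ, ∀ᶠ n : ℕ in atTop, c * (n : ℝ) ^ (-K) ≤ P n := by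
  have hdouble : ∀ᶠ u in atTop, ∀ v ≥ u, 2 ^ (-(2 * α)) * G v ≤ G (2 * v) :=
    eventually_forall_ge_atTop.2 <| eventually_le_doubling hratio hpos <|
      rpow_lt_rpow_of_exponent_lt one_lt_two (by linarith)
  refine ⟨2 ^ (-(2 * α)) * 2 ^ (-(2 * α)), by positivity, 1 + 2 * log x, ?_⟩
  filter_upwards [(ha.atTop_div_const two_pos).eventually hdouble, ha.eventually_gt_atTop 0, haG,
    hP, eventually_gt_atTop 0] with n hstep han hGa hPn hn
  have hn' : (0 : ℝ) < n := by exact_mod_cast hn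
  have hw : 1 ≤ x ^ (log n / α) := one_le_rpow hx (div_nonneg (log_natCast_nonneg n) hα.le)
  have hpotter := mul_rpow_le_apply_of_doubling hG (hG0 _) (by positivity) (by positivity) hstep
    ((half_le_self han.le).trans (le_mul_of_one_le_right han.le hw))
  have hratio' : a n * x ^ (log n / α) / (a n / 2) = 2 * x ^ (log n / α) := by
    field_simp
  rw [hratio', mul_rpow zero_le_two (by positivity),
    rpow_log_div_rpow_neg_mul (by linarith) hn' hα.ne'] at hpotter
  calc 2 ^ (-(2 * α)) * 2 ^ (-(2 * α)) * (n : ℝ) ^ (-(1 + 2 * log x))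
      = 2 ^ (-(2 * α)) * (2 ^ (-(2 * α)) * (n : ℝ) ^ (-(2 * log x))) * (1 / n) := by
        rw [neg_add, rpow_add hn', rpow_neg_one]
        ring
    _ ≤ 2 ^ (-(2 * α)) * (2 ^ (-(2 * α)) * (n : ℝ) ^ (-(2 * log x))) * G (a n / 2) := by gcongr
    _ ≤ G (a n * x ^ (log n / α)) := hpotter
    _ ≤ P n := hPn

end Tail

theorem limsup_log_div_log_le_neg_log {f : StieltjesFunction ℝ} {L : ℝ → ℝ} {α x : ℝ}
    {P : ℕ → ℝ} (hα : 0 < α) (hx : 1 ≤ x) (hf_nonneg : ∀ y, 0 ≤ f y)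
    (hf : Tendsto f atTop (𝓝 1)) (hL_pos : ∀ y > 0, 0 < L y)
    (hL : Tendsto (fun y => L (2 * y) / L y) atTop (𝓝 1))
    (hfL : ∀ y > 0, 1 - f y = y ^ (-α) * L y)
    (hP : ∀ᶠ n : ℕ in atTop, 0 < genInv f (1 - 1 / n) →
      1 - f (genInv f (1 - 1 / n) * x ^ (log n / α)) ≤ P n ∧
        P n ≤ n * (1 - f (genInv f (1 - 1 / n) * x ^ (log n / α))) + f 0 ^ n) :
    limsup (fun n : ℕ => log (P n) / log n) atTop ≤ -log x := by
  have hGpos : ∀ u > 0, 0 < 1 - f u := fun u hu =>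
    (hfL u hu).symm ▸ mul_pos (rpow_pos_of_pos hu _) (hL_pos u hu)
  have hlt_one (y : ℝ) : f y < 1 :=
    (f.mono (le_max_left y 1)).trans_lt (sub_pos.1 (hGpos _ (by positivity)))
  have hG : Antitone fun y => 1 - f y := fun _ _ h => sub_le_sub_left (f.mono h) 1
  have hG0 : 0 ≤ fun y => 1 - f y := fun y => sub_nonneg.2 (hlt_one y).le
  have hpos : ∀ᶠ u in atTop, 0 < 1 - f u := (eventually_gt_atTop 0).mono hGpos
  have hratio := tendsto_div_of_eq_rpow_mul two_pos hfL hL_pos hL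
  have ha : Tendsto (fun n : ℕ => genInv f (1 - 1 / n)) atTop atTop :=
    tendsto_genInv_one_sub_one_div hlt_one hf
  replace hP := (ha.eventually_gt_atTop 0).mp hP
  exact limsup_log_div_log_le
    (exists_rpow_le_tail hα hx hG hG0 hpos hratio ha
      (eventually_le_one_sub_apply_half_genInv hlt_one hf) (hP.mono fun _ h => h.1))
    fun b hb => exists_tail_le_rpow hα hx hG hG0 hpos hratio ha
      (eventually_one_sub_apply_genInv_le hf) (hf_nonneg 0) (hlt_one 0) (hP.mono fun _ h => h.2) hb

theorem stmt_6 {Ω : Type*} [MeasurableSpace Ω] (μ : Measure Ω) [IsProbabilityMeasure μ]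
    (X : ℕ → Ω → ℝ) (hX_meas : ∀ i, Measurable (X i))
    (hX_indep : iIndepFun X μ)
    (hX_ident : ∀ i, IdentDistrib (X i) (X 0) μ μ)
    (L : ℝ → ℝ) (α : ℝ) (hα : 0 < α)
    (hL_pos : ∀ x > (0 : ℝ), 0 < L x)
    (hL_slow : ∀ t > (0 : ℝ), Tendsto (fun x => L (t * x) / L x) atTop (nhds 1))
    (F : ℝ → ℝ) (hF : ∀ x, F x = (μ {ω | X 0 ω ≤ x}).toReal)
    (hFbar : ∀ x > (0 : ℝ), 1 - F x = x ^ (-α) * L x)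
    (a : ℕ → ℝ) (ha : ∀ n, a n = sInf {x : ℝ | 1 - 1 / (n : ℝ) ≤ F x})
    (Z : ℕ → Ω → ℝ)
    (hZ : ∀ n ω, Z n ω = ((⨆ i : Fin n, X i ω) / a n) ^ (α / Real.log n)) :
    ∀ x ≥ (1 : ℝ),
      limsup (fun n : ℕ => Real.log (μ {ω | x < Z n ω}).toReal / Real.log n) atTop
        ≤ -Real.log x := by
  intro x hx
  obtain ⟨ν, hν⟩ : ∃ ν : Measure ℝ, μ.map (X 0) = ν := ⟨_, rfl⟩
  have : IsProbabilityMeasure ν := hν ▸ Measure.isProbabilityMeasure_map (hX_meas 0).aemeasurable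
  obtain rfl : F = cdf ν := funext fun y => by
    rw [hF, cdf_eq_real, ← hν, map_measureReal_apply (hX_meas 0) measurableSet_Iic]; rfl
  obtain rfl : a = fun n : ℕ => genInv (cdf ν) (1 - 1 / n) := funext ha
  have hsurv (t : ℝ) : 1 - cdf ν t = μ.real {ω | t < X 0 ω} := by
    rw [hF, ← measureReal_def,
      ← probReal_compl_eq_one_sub (s := {ω | X 0 ω ≤ t}) (hX_meas 0 measurableSet_Iic)]
    simp only [Set.compl_ofPred, not_le]
  refine limsup_log_div_log_le_neg_log (P := fun n => μ.real {ω | x < Z n ω}) hα hx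
    (cdf_nonneg ν) (tendsto_cdf_atTop ν) hL_pos (hL_slow 2 two_pos) hFbar ?_
  filter_upwards [eventually_gt_atTop 1] with n hn han
  have hp : 0 < α / log n := div_pos hα (log_pos (by exact_mod_cast hn))
  have hlow := measureReal_lt_le_lt_rpow_iSup (μ := μ) (X := X) (x := x) han hp (by linarith) hn.pos
  have hup := measureReal_lt_rpow_iSup_le hX_indep hX_ident (x := x) han hp (by linarith) hn.pos
  rw [inv_div] at hlow hup
  simp only [hZ, hsurv, hF 0]
  exact ⟨hlow, hup⟩
end

section
/- Let F be a distribution function whose survival function F̄ is regularly varying of index -α, α > 0, and whose density f is non-increasing on some interval [x₁, ∞). Then lim_{x→∞} x f(x)/F̄(x) = α. -/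
open Filter

set_option maxHeartbeats 1000000 in
theorem stmt_8 (F L f : ℝ → ℝ) (α : ℝ) (hα : 0 < α)
    (hF_mono : Monotone F) (hF0 : ∀ x, 0 ≤ F x) (hF1 : ∀ x, F x ≤ 1)
    (hL_pos : ∀ x > (0 : ℝ), 0 < L x)
    (hL_slow : ∀ t > (0 : ℝ), Tendsto (fun x => L (t * x) / L x) atTop (nhds 1))
    (hFbar : ∀ x > (0 : ℝ), 1 - F x = x ^ (-α) * L x)
    (hf : ∀ x, HasDerivAt F (f x) x)
    (hf_mono : ∃ x₁ : ℝ, AntitoneOn f (Set.Ici x₁)) :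
    Tendsto (fun x => x * f x / (1 - F x)) atTop (nhds α) := by
  obtain ⟨x₁, hanti⟩ := hf_mono
  have hFdiff : Differentiable ℝ F := fun x => (hf x).differentiableAt
  have hFcont : Continuous F := hFdiff.continuous
  -- positivity of the survival function
  have hbar_pos : ∀ x > (0:ℝ), 0 < 1 - F x := fun x hx => by
    rw [hFbar x hx]
    exact mul_pos (Real.rpow_pos_of_pos hx _) (hL_pos x hx)
  -- ratio limit
  have hratio : ∀ c > (0:ℝ), Tendsto (fun x => (1 - F (c * x)) / (1 - F x)) atTop
      (nhds (c ^ (-α))) := by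
    intro c hc
    have h1 : Tendsto (fun x => c ^ (-α) * (L (c * x) / L x)) atTop (nhds (c ^ (-α) * 1)) :=
      (hL_slow c hc).const_mul _
    rw [mul_one] at h1
    refine h1.congr' ?_
    filter_upwards [eventually_gt_atTop 0] with x hx
    rw [hFbar x hx, hFbar (c * x) (mul_pos hc hx), Real.mul_rpow hc.le hx.le]
    have hx' : (x : ℝ) ^ (-α) ≠ 0 := (Real.rpow_pos_of_pos hx _).ne'
    have hL' : L x ≠ 0 := (hL_pos x hx).ne'
    field_simp
  -- key inequalities from monotonicity of the density
  have key : ∀ a b : ℝ, x₁ ≤ a → a ≤ b →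
      f b * (b - a) ≤ F b - F a ∧ F b - F a ≤ f a * (b - a) := by
    intro a b ha hab
    constructor
    · have hm : MonotoneOn (fun y => F y - f b * y) (Set.Icc a b) := by
        apply monotoneOn_of_deriv_nonneg (convex_Icc a b)
        · exact (hFcont.sub (continuous_const.mul continuous_id)).continuousOn
        · exact (hFdiff.sub ((differentiable_const _).mul differentiable_id)).differentiableOn
        · intro y hy
          rw [interior_Icc] at hy
          have hd : HasDerivAt (fun y => F y - f b * y) (f y - f b * 1) y :=
            (hf y).sub ((hasDerivAt_id y).const_mul (f b))
          rw [hd.deriv, mul_one, sub_nonneg]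
          exact hanti (le_trans ha hy.1.le) (le_trans ha (le_trans hy.1.le hy.2.le)) hy.2.le
      have h := hm (Set.left_mem_Icc.2 hab) (Set.right_mem_Icc.2 hab) hab
      simp only at h
      nlinarith [h]
    · have hm : AntitoneOn (fun y => F y - f a * y) (Set.Icc a b) := by
        apply antitoneOn_of_deriv_nonpos (convex_Icc a b)
        · exact (hFcont.sub (continuous_const.mul continuous_id)).continuousOn
        · exact (hFdiff.sub ((differentiable_const _).mul differentiable_id)).differentiableOn
        · intro y hy
          rw [interior_Icc] at hy
          have hd : HasDerivAt (fun y => F y - f a * y) (f y - f a * 1) y :=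
            (hf y).sub ((hasDerivAt_id y).const_mul (f a))
          rw [hd.deriv, mul_one, sub_nonpos]
          exact hanti ha (le_trans ha hy.1.le) hy.1.le
      have h := hm (Set.left_mem_Icc.2 hab) (Set.right_mem_Icc.2 hab) hab
      simp only at h
      nlinarith [h]
  -- slope limit : (1 - t^(-α))/(t-1) → α as t → 1
  have hslope : Tendsto (fun t : ℝ => (1 - t ^ (-α)) / (t - 1)) (nhdsWithin 1 {(1:ℝ)}ᶜ)
      (nhds α) := by
    have h : HasDerivAt (fun x : ℝ => x ^ (-α)) (-α * (1:ℝ) ^ (-α - 1)) 1 :=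
      Real.hasDerivAt_rpow_const (Or.inl one_ne_zero)
    rw [Real.one_rpow, mul_one] at h
    have h2 := (hasDerivAt_iff_tendsto_slope.1 h).neg
    rw [neg_neg] at h2
    refine h2.congr fun u => ?_
    rw [slope_def_field, Real.one_rpow, ← neg_div, neg_sub]
  rw [Metric.tendsto_nhds]
  intro ε hε
  have hev : ∀ᶠ u in nhdsWithin 1 {(1:ℝ)}ᶜ, dist ((1 - u ^ (-α)) / (u - 1)) α < ε :=
    hslope (Metric.ball_mem_nhds α hε)
  -- pick t > 1
  have hgt : ∀ᶠ u in nhdsWithin 1 (Set.Ioi (1:ℝ)),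
      dist ((1 - u ^ (-α)) / (u - 1)) α < ε ∧ 1 < u :=
    ((hev.filter_mono (nhdsWithin_mono _ fun u hu => hu.ne')).and self_mem_nhdsWithin)
  obtain ⟨t, htd, ht1⟩ := hgt.exists
  -- pick 0 < s < 1
  have hlt : ∀ᶠ u in nhdsWithin 1 (Set.Iio (1:ℝ)),
      (dist ((1 - u ^ (-α)) / (u - 1)) α < ε ∧ u < 1) ∧ 0 < u :=
    ((hev.filter_mono (nhdsWithin_mono _ fun u hu => hu.ne)).and self_mem_nhdsWithin).and
      ((eventually_gt_nhds zero_lt_one).filter_mono nhdsWithin_le_nhds)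
  obtain ⟨s, ⟨hsd, hs1⟩, hs0⟩ := hlt.exists
  rw [Real.dist_eq, abs_sub_lt_iff] at htd hsd
  have ht0 : (0:ℝ) < t := lt_trans one_pos ht1
  -- limits of the bounding functions
  have hlow : Tendsto (fun x => (1 - (1 - F (t * x)) / (1 - F x)) / (t - 1)) atTop
      (nhds ((1 - t ^ (-α)) / (t - 1))) :=
    (tendsto_const_nhds.sub (hratio t ht0)).div_const _
  have hupp : Tendsto (fun x => ((1 - F (s * x)) / (1 - F x) - 1) / (1 - s)) atTop
      (nhds ((s ^ (-α) - 1) / (1 - s))) :=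
    ((hratio s hs0).sub tendsto_const_nhds).div_const _
  have hval_s : (s ^ (-α) - 1) / (1 - s) = (1 - s ^ (-α)) / (s - 1) := by
    rw [← neg_div_neg_eq]; ring_nf
  rw [hval_s] at hupp
  have hlow_ev : ∀ᶠ x in atTop, α - ε < (1 - (1 - F (t * x)) / (1 - F x)) / (t - 1) :=
    hlow.eventually (eventually_gt_nhds (by linarith [htd.2]))
  have hupp_ev : ∀ᶠ x in atTop, ((1 - F (s * x)) / (1 - F x) - 1) / (1 - s) < α + ε :=
    hupp.eventually (eventually_lt_nhds (by linarith [hsd.1]))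
  filter_upwards [hlow_ev, hupp_ev, eventually_ge_atTop (max 1 x₁),
    eventually_ge_atTop ((|x₁| + 1) / s)] with x hxl hxu hx1 hxs
  have hx1' : (1:ℝ) ≤ x := le_trans (le_max_left _ _) hx1
  have hxpos : (0:ℝ) < x := lt_of_lt_of_le one_pos hx1'
  have hxx1 : x₁ ≤ x := le_trans (le_max_right _ _) hx1
  have hsx : x₁ ≤ s * x := by
    have : |x₁| + 1 ≤ s * x := by
      rw [div_le_iff₀ hs0] at hxs; nlinarith [hxs]
    nlinarith [abs_nonneg x₁, le_abs_self x₁]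
  have hB : 0 < 1 - F x := hbar_pos x hxpos
  set B := 1 - F x with hBdef
  set Bt := 1 - F (t * x) with hBtdef
  set Bs := 1 - F (s * x) with hBsdef
  have hkey1 : F (t * x) - F x ≤ f x * (t * x - x) :=
    (key x (t * x) hxx1 (by nlinarith)).2
  have hkey2 : f x * (x - s * x) ≤ F x - F (s * x) :=
    (key (s * x) x hsx (by nlinarith)).1
  have e1 : Bt / B * B = Bt := div_mul_cancel₀ _ hB.ne'
  have e2 : Bs / B * B = Bs := div_mul_cancel₀ _ hB.ne'
  have hBBt : B - Bt = F (t * x) - F x := by rw [hBdef, hBtdef]; ring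
  have hBBs : Bs - B = F x - F (s * x) := by rw [hBdef, hBsdef]; ring
  rw [Real.dist_eq, abs_sub_lt_iff]
  constructor
  · -- upper bound
    have h3 : f x * x * (1 - s) ≤ Bs - B := by rw [hBBs]; linarith [hkey2, mul_sub (f x) x (s*x)]
    have h4 : x * f x / B * (1 - s) ≤ Bs / B - 1 := by
      rw [div_mul_eq_mul_div, div_le_iff₀ hB]
      have h2 : (Bs / B - 1) * B = Bs - B := by rw [sub_mul, e2, one_mul]
      rw [h2]; linarith [h3, mul_comm x (f x)]
    have h6 : Bs / B - 1 < (α + ε) * (1 - s) :=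
      (div_lt_iff₀ (show (0:ℝ) < 1 - s by linarith)).1 hxu
    have h7 := lt_of_mul_lt_mul_right (lt_of_le_of_lt h4 h6) (by linarith : (0:ℝ) ≤ 1 - s)
    linarith
  · -- lower bound
    have h3 : B - Bt ≤ f x * x * (t - 1) := by rw [hBBt]; linarith [hkey1, mul_sub (f x) (t*x) x]
    have h4 : 1 - Bt / B ≤ x * f x / B * (t - 1) := by
      rw [div_mul_eq_mul_div, le_div_iff₀ hB]
      have h2 : (1 - Bt / B) * B = B - Bt := by rw [sub_mul, e1, one_mul]
      rw [h2]; linarith [h3, mul_comm x (f x)]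
    have h6 : (α - ε) * (t - 1) < 1 - Bt / B :=
      (lt_div_iff₀ (show (0:ℝ) < t - 1 by linarith)).1 hxl
    have h7 := lt_of_mul_lt_mul_right (lt_of_lt_of_le h6 h4) (by linarith : (0:ℝ) ≤ t - 1)
    linarith
end

section
/- Let F̄ be regularly varying of index -α, α > 0, with density f satisfying the von Mises condition lim_{x→∞} x f(x)/F̄(x) = α. Let a_n = F^{←}(1-1/n) and t_n(x) = a_n x^{(log n)/α}. Then for every M > 1, (1/log n) log f(t_n(x)) → -(1 + 1/α)(1 + log x) uniformly for x ∈ [1, M]. -/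
open Filter

lemma aux_glog (F f : ℝ → ℝ) (α : ℝ) (hα : 0 < α)
    (hFpos : ∀ x : ℝ, 0 < 1 - F x)
    (hf : ∀ x, HasDerivAt F (f x) x)
    (hVM : Tendsto (fun x => x * f x / (1 - F x)) atTop (nhds α)) :
    Tendsto (fun t => Real.log (1 - F t) / Real.log t) atTop (nhds (-α)) := by
  have hgd : ∀ x : ℝ, HasDerivAt (fun t => Real.log (1 - F t)) (-(f x / (1 - F x))) x := by
    intro x
    have h1 : HasDerivAt (fun t => 1 - F t) (0 - f x) x :=
      (hasDerivAt_const x (1 : ℝ)).sub (hf x)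
    simpa [neg_div] using h1.log (ne_of_gt (hFpos x))
  rw [Metric.tendsto_nhds]
  intro ε hε
  have hε2 : 0 < ε / 2 := by positivity
  have hev : ∀ᶠ t in atTop, |t * f t / (1 - F t) - α| < ε / 2 := by
    have := Metric.tendsto_nhds.mp hVM (ε / 2) hε2
    simpa [Real.dist_eq] using this
  obtain ⟨T₀, hT₀⟩ := eventually_atTop.mp hev
  set T : ℝ := max T₀ 2 with hTdef
  have hT2 : (2 : ℝ) ≤ T := le_max_right _ _
  have hTpos : (0 : ℝ) < T := by linarith
  -- derivative facts on [T, ∞)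
  have hmono : MonotoneOn (fun t => Real.log (1 - F t) + (α + ε / 2) * Real.log t)
      (Set.Ici T) := by
    have hder : ∀ x ∈ Set.Ici T,
        HasDerivAt (fun t => Real.log (1 - F t) + (α + ε / 2) * Real.log t)
          (-(f x / (1 - F x)) + (α + ε / 2) * x⁻¹) x := by
      intro x hx
      have hx0 : x ≠ 0 := ne_of_gt (lt_of_lt_of_le hTpos hx)
      exact (hgd x).add ((Real.hasDerivAt_log hx0).const_mul (α + ε / 2))
    apply monotoneOn_of_hasDerivWithinAt_nonneg (convex_Ici T)
      (fun x hx => (hder x hx).continuousAt.continuousWithinAt)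
      (f' := fun x => -(f x / (1 - F x)) + (α + ε / 2) * x⁻¹)
      (fun x hx => ((hder x (interior_subset hx)).hasDerivWithinAt))
    intro x hx
    rw [interior_Ici] at hx
    have hxT : T < x := hx
    have hx0 : (0 : ℝ) < x := lt_trans hTpos hxT
    have hb := hT₀ x (le_trans (le_max_left _ _) (le_of_lt hxT))
    have hb1 : x * f x / (1 - F x) ≤ α + ε / 2 := by
      have := abs_lt.mp hb
      linarith [this.2]
    have hb2 : f x / (1 - F x) ≤ (α + ε / 2) / x := by
      rw [le_div_iff₀ hx0]
      calc f x / (1 - F x) * x = x * f x / (1 - F x) := by ring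
        _ ≤ α + ε / 2 := hb1
    have : (α + ε / 2) * x⁻¹ = (α + ε / 2) / x := by ring
    linarith [hb2, this.ge]
  have hanti : AntitoneOn (fun t => Real.log (1 - F t) + (α - ε / 2) * Real.log t)
      (Set.Ici T) := by
    have hder : ∀ x ∈ Set.Ici T,
        HasDerivAt (fun t => Real.log (1 - F t) + (α - ε / 2) * Real.log t)
          (-(f x / (1 - F x)) + (α - ε / 2) * x⁻¹) x := by
      intro x hx
      have hx0 : x ≠ 0 := ne_of_gt (lt_of_lt_of_le hTpos hx)
      exact (hgd x).add ((Real.hasDerivAt_log hx0).const_mul (α - ε / 2))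
    apply antitoneOn_of_hasDerivWithinAt_nonpos (convex_Ici T)
      (fun x hx => (hder x hx).continuousAt.continuousWithinAt)
      (f' := fun x => -(f x / (1 - F x)) + (α - ε / 2) * x⁻¹)
      (fun x hx => ((hder x (interior_subset hx)).hasDerivWithinAt))
    intro x hx
    rw [interior_Ici] at hx
    have hxT : T < x := hx
    have hx0 : (0 : ℝ) < x := lt_trans hTpos hxT
    have hb := hT₀ x (le_trans (le_max_left _ _) (le_of_lt hxT))
    have hb1 : α - ε / 2 ≤ x * f x / (1 - F x) := by
      have := abs_lt.mp hb
      linarith [this.1]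
    have hb2 : (α - ε / 2) / x ≤ f x / (1 - F x) := by
      rw [div_le_iff₀ hx0]
      calc f x / (1 - F x) * x = x * f x / (1 - F x) := by ring
        _ ≥ α - ε / 2 := hb1
    have : (α - ε / 2) * x⁻¹ = (α - ε / 2) / x := by ring
    linarith [hb2, this.ge]
  set A : ℝ := Real.log (1 - F T)
  set LT : ℝ := Real.log T
  set C : ℝ := |A + (α + ε / 2) * LT| + |A + (α - ε / 2) * LT| + 1 with hCdef
  have hC0 : 0 < C := by positivity
  have h1 : ∀ᶠ t : ℝ in atTop, T ≤ t := eventually_ge_atTop T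
  have h2 : ∀ᶠ t : ℝ in atTop, 2 * C / ε + 1 ≤ Real.log t :=
    Real.tendsto_log_atTop.eventually_ge_atTop _
  filter_upwards [h1, h2] with t ht hlt
  have hltpos : 0 < Real.log t := by
    have : 0 < 2 * C / ε := by positivity
    linarith
  have hltne : Real.log t ≠ 0 := ne_of_gt hltpos
  have hmem : t ∈ Set.Ici T := ht
  have hTm : T ∈ Set.Ici T := Set.self_mem_Ici
  have hup := hanti hTm hmem ht
  have hdn := hmono hTm hmem ht
  simp only at hup hdn
  -- bounds on g t + α * log t
  have hub : Real.log (1 - F t) + α * Real.log t ≤ (A + (α - ε / 2) * LT) + (ε / 2) * Real.log t := by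
    have : Real.log (1 - F t) + (α - ε / 2) * Real.log t ≤ A + (α - ε / 2) * LT := hup
    nlinarith [this]
  have hlb : (A + (α + ε / 2) * LT) - (ε / 2) * Real.log t ≤ Real.log (1 - F t) + α * Real.log t := by
    have : A + (α + ε / 2) * LT ≤ Real.log (1 - F t) + (α + ε / 2) * Real.log t := hdn
    nlinarith [this]
  have habs : |Real.log (1 - F t) + α * Real.log t| ≤ C + (ε / 2) * Real.log t := by
    rw [abs_le]
    constructor
    · have := neg_abs_le (A + (α + ε / 2) * LT)
      have h' : -(C + (ε / 2) * Real.log t) ≤ (A + (α + ε / 2) * LT) - (ε / 2) * Real.log t := by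
        have := neg_abs_le (A + (α + ε / 2) * LT)
        have h0 : (0:ℝ) ≤ |A + (α - ε / 2) * LT| := abs_nonneg _
        rw [hCdef]; push_cast; nlinarith
      linarith [hlb]
    · have := le_abs_self (A + (α - ε / 2) * LT)
      have h0 : (0:ℝ) ≤ |A + (α + ε / 2) * LT| := abs_nonneg _
      have h' : (A + (α - ε / 2) * LT) + (ε / 2) * Real.log t ≤ C + (ε / 2) * Real.log t := by
        rw [hCdef]; nlinarith
      linarith [hub]
  rw [Real.dist_eq]
  have heq : Real.log (1 - F t) / Real.log t - -α
      = (Real.log (1 - F t) + α * Real.log t) / Real.log t := by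
    field_simp
    ring
  rw [heq, abs_div, abs_of_pos hltpos]
  rw [div_lt_iff₀ hltpos]
  have hcε : C < (ε / 2) * Real.log t := by
    have : (ε / 2) * (2 * C / ε + 1) ≤ (ε / 2) * Real.log t :=
      mul_le_mul_of_nonneg_left hlt (by positivity)
    have heq2 : (ε / 2) * (2 * C / ε + 1) = C + ε / 2 := by
      field_simp
    nlinarith
  calc |Real.log (1 - F t) + α * Real.log t| ≤ C + (ε / 2) * Real.log t := habs
    _ < (ε / 2) * Real.log t + (ε / 2) * Real.log t := by linarith
    _ = ε * Real.log t := by ring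

lemma aux_bound (α ε C₀ lM δ R G ℓ ℓn u X : ℝ)
    (hα : 0 < α) (hε : 0 < ε) (hC₀ : 0 < C₀) (hlM : 0 ≤ lM)
    (hδ0 : 0 < δ) (hδ1 : δ ≤ 1)
    (hδε : δ * (α + 1 + (1/α + 1 + lM/α)) ≤ ε/2)
    (hℓeq : ℓ = u + ℓn/α * X)
    (hℓpos : 0 < ℓ) (hℓn : 2*C₀/ε + 1 ≤ ℓn)
    (hR : |R| ≤ C₀)
    (hq : |G/ℓ - (-α)| < δ)
    (hv : |u/ℓn - 1/α| < δ)
    (hX : 0 ≤ X) (hXM : X ≤ lM) :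
    |(-(1 + 1/α)) * (1 + X) - (R + G - ℓ)/ℓn| < ε := by
  have hℓnpos : 0 < ℓn := by
    have : 0 < 2*C₀/ε := by positivity
    linarith
  set K₀ : ℝ := 1/α + 1 + lM/α with hK₀def
  set q : ℝ := G/ℓ with hqdef
  set v : ℝ := u/ℓn with hvdef
  have hG : G = q * ℓ := (div_mul_cancel₀ G (ne_of_gt hℓpos)).symm
  have hu : u = v * ℓn := (div_mul_cancel₀ u (ne_of_gt hℓnpos)).symm
  have hval : (R + G - ℓ)/ℓn = R/ℓn + (q - 1)*(v + X/α) := by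
    rw [hG, hℓeq, hu]
    field_simp
    ring
  have key : (-(1 + 1/α)) * (1 + X) - (R/ℓn + (q - 1)*(v + X/α))
      = -(R/ℓn) + (α + 1)*(v - 1/α) - (q + α)*(1/α + X/α + (v - 1/α)) := by
    field_simp
    ring
  rw [hval, key]
  have habs1 : |R/ℓn| < ε/2 := by
    rw [abs_div, abs_of_pos hℓnpos, div_lt_iff₀ hℓnpos]
    have h1 : ε/2 * (2*C₀/ε + 1) ≤ ε/2 * ℓn := by nlinarith
    have h2 : ε/2 * (2*C₀/ε + 1) = C₀ + ε/2 := by field_simp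
    calc |R| ≤ C₀ := hR
      _ < C₀ + ε/2 := by linarith
      _ ≤ ε/2 * ℓn := by linarith
  have habs2 : |(α + 1)*(v - 1/α)| ≤ (α + 1) * δ := by
    rw [abs_mul, abs_of_pos (by linarith : (0:ℝ) < α + 1)]
    exact mul_le_mul_of_nonneg_left hv.le (by linarith)
  have habs3 : |1/α + X/α + (v - 1/α)| ≤ K₀ := by
    have h1 : |1/α + X/α| = 1/α + X/α := abs_of_nonneg (by positivity)
    have h2 : X/α ≤ lM/α := by gcongr
    calc |1/α + X/α + (v - 1/α)| ≤ |1/α + X/α| + |v - 1/α| := abs_add_le _ _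
      _ ≤ (1/α + X/α) + δ := by rw [h1]; linarith [hv.le]
      _ ≤ 1/α + lM/α + 1 := by linarith
      _ = K₀ := by rw [hK₀def]; ring
  have habs4 : |(q + α)*(1/α + X/α + (v - 1/α))| ≤ δ * K₀ := by
    rw [abs_mul]
    apply mul_le_mul ?_ habs3 (abs_nonneg _) hδ0.le
    have h : q + α = q - (-α) := by ring
    rw [h]; exact hq.le
  have tri : |-(R/ℓn) + (α + 1)*(v - 1/α) - (q + α)*(1/α + X/α + (v - 1/α))|
      ≤ |R/ℓn| + |(α + 1)*(v - 1/α)| + |(q + α)*(1/α + X/α + (v - 1/α))| := by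
    calc |-(R/ℓn) + (α + 1)*(v - 1/α) - (q + α)*(1/α + X/α + (v - 1/α))|
        ≤ |-(R/ℓn) + (α + 1)*(v - 1/α)| + |(q + α)*(1/α + X/α + (v - 1/α))| := abs_sub _ _
      _ ≤ |-(R/ℓn)| + |(α + 1)*(v - 1/α)| + |(q + α)*(1/α + X/α + (v - 1/α))| := by
          linarith [abs_add_le (-(R/ℓn)) ((α + 1)*(v - 1/α))]
      _ = |R/ℓn| + |(α + 1)*(v - 1/α)| + |(q + α)*(1/α + X/α + (v - 1/α))| := by rw [abs_neg]
  have hmul : (α + 1)*δ + δ*K₀ = δ*(α + 1 + K₀) := by ring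
  have hδK : δ * (α + 1 + K₀) ≤ ε/2 := hδε
  linarith

set_option maxHeartbeats 1000000 in
theorem stmt_13 (F L f : ℝ → ℝ) (α M : ℝ) (hα : 0 < α) (hM : 1 < M)
    (hF_mono : Monotone F) (hF0 : ∀ x, 0 ≤ F x) (hF1 : ∀ x, F x ≤ 1)
    (hL_pos : ∀ x > (0 : ℝ), 0 < L x)
    (hL_slow : ∀ t > (0 : ℝ), Tendsto (fun x => L (t * x) / L x) atTop (nhds 1))
    (hFbar : ∀ x > (0 : ℝ), 1 - F x = x ^ (-α) * L x)
    (hf : ∀ x, HasDerivAt F (f x) x)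
    (hVonMises : Tendsto (fun x => x * f x / (1 - F x)) atTop (nhds α))
    (a : ℕ → ℝ) (ha : ∀ n, a n = sInf {x : ℝ | 1 - 1 / (n : ℝ) ≤ F x}) :
    TendstoUniformlyOn
      (fun (n : ℕ) (x : ℝ) => Real.log (f (a n * x ^ (Real.log n / α))) / Real.log n)
      (fun x => -(1 + 1 / α) * (1 + Real.log x)) atTop (Set.Icc 1 M) := by
  have hFpos : ∀ x : ℝ, 0 < 1 - F x := by
    intro x
    have hy : (0 : ℝ) < max x 1 := lt_of_lt_of_le one_pos (le_max_right _ _)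
    have h1 : 0 < 1 - F (max x 1) := by
      rw [hFbar _ hy]
      exact mul_pos (Real.rpow_pos_of_pos hy _) (hL_pos _ hy)
    have h2 := hF_mono (le_max_left x 1)
    linarith
  have hglog := aux_glog F f α hα hFpos hf hVonMises
  have hFcont : Continuous F := continuous_iff_continuousAt.mpr fun x => (hf x).continuousAt
  have hgbot : Tendsto (fun t => Real.log (1 - F t)) atTop atBot := by
    have h1 : Tendsto (fun t => Real.log (1 - F t) / Real.log t * Real.log t) atTop atBot :=
      Filter.Tendsto.neg_mul_atTop (show -α < 0 by linarith) hglog Real.tendsto_log_atTop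
    refine h1.congr' ?_
    filter_upwards [eventually_ge_atTop (2 : ℝ)] with t ht
    have : Real.log t ≠ 0 := ne_of_gt (Real.log_pos (by linarith))
    rw [div_mul_cancel₀ _ this]
  have hFbar0 : Tendsto (fun t => 1 - F t) atTop (nhds 0) := by
    have h1 := Real.tendsto_exp_atBot.comp hgbot
    refine h1.congr ?_
    intro t
    exact Real.exp_log (hFpos t)
  have hF1lt : F 1 < 1 := by linarith [hFpos 1]
  obtain ⟨N₁, hN₁⟩ : ∃ N₁ : ℕ, ∀ n ≥ N₁, F (a n) = 1 - 1 / (n : ℝ) ∧ 1 ≤ a n := by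
    obtain ⟨N₁, hN⟩ := exists_nat_gt (max 2 (1 / (1 - F 1)))
    refine ⟨N₁, fun n hn => ?_⟩
    have hnN : (N₁ : ℝ) ≤ n := Nat.cast_le.mpr hn
    have h2n : (2 : ℝ) ≤ n := le_trans (le_trans (le_max_left _ _) hN.le) hnN
    have hnpos : (0 : ℝ) < n := by linarith
    have hinvn : 1 / (n : ℝ) < 1 - F 1 := by
      have h1 : 1 / (1 - F 1) < n := lt_of_lt_of_le (lt_of_le_of_lt (le_max_right _ _) hN) hnN
      have h2 : 0 < 1 - F 1 := hFpos 1
      rw [div_lt_iff₀ h2] at h1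
      rw [div_lt_iff₀ hnpos]
      nlinarith
    set S := {x : ℝ | 1 - 1 / (n : ℝ) ≤ F x} with hSdef
    have hSne : S.Nonempty := by
      obtain ⟨t, ht⟩ := (hFbar0.eventually_lt_const (show (0:ℝ) < 1 / n by positivity)).exists
      exact ⟨t, by simp only [hSdef, Set.mem_setOf_eq]; linarith⟩
    have hSlb : ∀ x ∈ S, (1 : ℝ) ≤ x := by
      intro x hx
      by_contra h
      push_neg at h
      have : F x ≤ F 1 := hF_mono h.le
      have hx' : 1 - 1 / (n : ℝ) ≤ F x := hx
      linarith
    have hSbdd : BddBelow S := ⟨1, hSlb⟩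
    have hSclosed : IsClosed S := by
      have : S = F ⁻¹' Set.Ici (1 - 1 / (n : ℝ)) := rfl
      rw [this]
      exact (isClosed_Ici).preimage hFcont
    have hmem : a n ∈ S := by
      rw [ha n]
      exact hSclosed.csInf_mem hSne hSbdd
    have ha1 : (1 : ℝ) ≤ a n := hSlb _ hmem
    have hge : 1 - 1 / (n : ℝ) ≤ F (a n) := hmem
    have hle : F (a n) ≤ 1 - 1 / (n : ℝ) := by
      by_contra h
      push_neg at h
      have hopen : IsOpen {y : ℝ | 1 - 1 / (n : ℝ) < F y} := isOpen_lt continuous_const hFcont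
      have hnb : {y : ℝ | 1 - 1 / (n : ℝ) < F y} ∈ nhds (a n) := hopen.mem_nhds h
      obtain ⟨δ', hδ', hball⟩ := Metric.mem_nhds_iff.mp hnb
      have hyS : a n - δ' / 2 ∈ S := by
        have hmem2 : a n - δ' / 2 ∈ Metric.ball (a n) δ' := by
          rw [Metric.mem_ball, Real.dist_eq]
          rw [abs_of_nonpos (by linarith)]
          linarith
        have h6 : 1 - 1 / (n : ℝ) < F (a n - δ' / 2) := hball hmem2
        show 1 - 1 / (n : ℝ) ≤ F (a n - δ' / 2)
        exact h6.le
      have h5 : sInf S ≤ a n - δ' / 2 := csInf_le hSbdd hyS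
      rw [hSdef, ← ha n] at h5
      linarith
    exact ⟨le_antisymm hle hge, ha1⟩
  have haTop : Tendsto a atTop atTop := by
    rw [tendsto_atTop]
    intro b
    have hb'pos : (0 : ℝ) < max b 1 := lt_of_lt_of_le one_pos (le_max_right _ _)
    have hc : 0 < 1 - F (max b 1) := hFpos _
    have h1 : ∀ᶠ n : ℕ in atTop, 1 / (n : ℝ) < 1 - F (max b 1) :=
      tendsto_one_div_atTop_nhds_zero_nat.eventually_lt_const hc
    filter_upwards [h1, eventually_ge_atTop N₁] with n hn1 hnN
    obtain ⟨hFa, ha1⟩ := hN₁ n hnN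
    by_contra h
    push_neg at h
    have h2 : F (a n) ≤ F (max b 1) := hF_mono (le_trans h.le (le_max_left b 1))
    rw [hFa] at h2
    linarith
  have hlogn : Tendsto (fun n : ℕ => Real.log n) atTop atTop :=
    Real.tendsto_log_atTop.comp tendsto_natCast_atTop_atTop
  have hla : Tendsto (fun n : ℕ => Real.log (a n) / Real.log n) atTop (nhds (1 / α)) := by
    have h1 : Tendsto (fun n : ℕ => Real.log (1 - F (a n)) / Real.log (a n)) atTop (nhds (-α)) :=
      hglog.comp haTop
    have h2 : Tendsto (fun n : ℕ => Real.log n / Real.log (a n)) atTop (nhds α) := by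
      have h3 : (fun n : ℕ => -(Real.log (1 - F (a n)) / Real.log (a n))) =ᶠ[atTop]
          (fun n : ℕ => Real.log n / Real.log (a n)) := by
        filter_upwards [eventually_ge_atTop N₁] with n hn
        obtain ⟨hFa, _⟩ := hN₁ n hn
        rw [hFa]
        have he : (1 : ℝ) - (1 - 1 / (n : ℝ)) = ((n : ℝ))⁻¹ := by ring
        rw [he, Real.log_inv, neg_div, neg_neg]
      exact Tendsto.congr' h3 (by simpa using h1.neg)
    have h4 := h2.inv₀ (ne_of_gt hα)
    simp only [inv_div] at h4
    rwa [show (α : ℝ)⁻¹ = 1 / α by rw [one_div]] at h4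
  -- von Mises log bound
  have hVM2 : ∀ᶠ t : ℝ in atTop, |t * f t / (1 - F t) - α| < α / 2 := by
    have := Metric.tendsto_nhds.mp hVonMises (α / 2) (by positivity)
    simpa [Real.dist_eq] using this
  obtain ⟨T₁, hT₁⟩ := eventually_atTop.mp hVM2
  set C₀ : ℝ := |Real.log (α / 2)| + |Real.log (3 * α / 2)| + 1 with hC₀def
  have hC₀pos : 0 < C₀ := by positivity
  rw [Metric.tendstoUniformlyOn_iff]
  intro ε hε
  have hlM : 0 < Real.log M := Real.log_pos hM
  set K₀ : ℝ := 1 / α + 1 + Real.log M / α with hK₀def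
  have hK₀pos : 0 < K₀ := by positivity
  set δ : ℝ := min 1 (ε / (2 * (α + 1 + K₀))) with hδdef
  have hδ0 : 0 < δ := lt_min one_pos (by positivity)
  have hδ1 : δ ≤ 1 := min_le_left _ _
  have hδε : δ * (α + 1 + K₀) ≤ ε / 2 := by
    have h1 : δ ≤ ε / (2 * (α + 1 + K₀)) := min_le_right _ _
    have h2 : 0 < α + 1 + K₀ := by positivity
    calc δ * (α + 1 + K₀) ≤ ε / (2 * (α + 1 + K₀)) * (α + 1 + K₀) := by
          exact mul_le_mul_of_nonneg_right h1 h2.le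
      _ = ε / 2 := by field_simp
  obtain ⟨T₂, hT₂⟩ := eventually_atTop.mp (Metric.tendsto_nhds.mp hglog δ hδ0)
  have E2 : ∀ᶠ n : ℕ in atTop, |Real.log (a n) / Real.log n - 1 / α| < δ := by
    have := Metric.tendsto_nhds.mp hla δ hδ0
    simpa [Real.dist_eq] using this
  have E3 : ∀ᶠ n : ℕ in atTop, max (max T₁ T₂) (Real.exp 1) ≤ a n :=
    haTop.eventually_ge_atTop _
  have E4 : ∀ᶠ n : ℕ in atTop, 2 * C₀ / ε + 1 ≤ Real.log n :=
    hlogn.eventually_ge_atTop _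
  filter_upwards [E2, E3, E4] with n hv ha' hln
  intro x hx
  obtain ⟨hx1, hxM⟩ := hx
  have hx0 : (0 : ℝ) < x := lt_of_lt_of_le one_pos hx1
  have haexp : Real.exp 1 ≤ a n := le_trans (le_max_right _ _) ha'
  have haT₁ : T₁ ≤ a n := le_trans (le_trans (le_max_left _ _) (le_max_left _ _)) ha'
  have haT₂ : T₂ ≤ a n := le_trans (le_trans (le_max_right _ _) (le_max_left _ _)) ha'
  have ha0 : (0 : ℝ) < a n := lt_of_lt_of_le (Real.exp_pos 1) haexp
  have hlnpos : 0 < Real.log n := by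
    have : 0 < 2 * C₀ / ε := by positivity
    linarith
  have he0 : 0 ≤ Real.log n / α := by positivity
  have hxe1 : 1 ≤ x ^ (Real.log n / α) := by
    calc (1 : ℝ) = x ^ (0 : ℝ) := (Real.rpow_zero x).symm
      _ ≤ x ^ (Real.log n / α) := Real.rpow_le_rpow_of_exponent_le hx1 he0
  set t : ℝ := a n * x ^ (Real.log n / α) with htdef
  have ht_ge : a n ≤ t := le_mul_of_one_le_right ha0.le hxe1
  have ht0 : (0 : ℝ) < t := lt_of_lt_of_le ha0 ht_ge
  have hlt1 : 1 ≤ Real.log t := by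
    calc (1 : ℝ) = Real.log (Real.exp 1) := (Real.log_exp 1).symm
      _ ≤ Real.log t := Real.log_le_log (Real.exp_pos 1) (le_trans haexp ht_ge)
  have hltpos : 0 < Real.log t := by linarith
  have hlogt : Real.log t = Real.log (a n) + Real.log n / α * Real.log x := by
    rw [htdef, Real.log_mul (ne_of_gt ha0) (ne_of_gt (lt_of_lt_of_le one_pos hxe1)),
      Real.log_rpow hx0]
  -- von Mises at t
  have hbt := hT₁ t (le_trans haT₁ ht_ge)
  have hRlow : α / 2 < t * f t / (1 - F t) := by
    have := abs_lt.mp hbt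
    linarith [this.1]
  have hRhigh : t * f t / (1 - F t) < 3 * α / 2 := by
    have := abs_lt.mp hbt
    linarith [this.2]
  have hRpos : 0 < t * f t / (1 - F t) := lt_trans (by positivity) hRlow
  have htfpos : 0 < t * f t := by
    have h := mul_pos hRpos (hFpos t)
    rwa [div_mul_cancel₀ _ (ne_of_gt (hFpos t))] at h
  have hftpos : 0 < f t := by
    rcases mul_pos_iff.mp htfpos with h | h
    · exact h.2
    · linarith [h.1, ht0]
  have hlogR : |Real.log (t * f t / (1 - F t))| ≤ C₀ := by
    have hαh : (0 : ℝ) < α / 2 := by positivity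
    have hlow : Real.log (α / 2) ≤ Real.log (t * f t / (1 - F t)) :=
      Real.log_le_log hαh hRlow.le
    have hhigh : Real.log (t * f t / (1 - F t)) ≤ Real.log (3 * α / 2) :=
      Real.log_le_log hRpos hRhigh.le
    rw [abs_le]
    constructor
    · have := neg_abs_le (Real.log (α / 2))
      rw [hC₀def]
      have h0 : (0:ℝ) ≤ |Real.log (3 * α / 2)| := abs_nonneg _
      nlinarith
    · have := le_abs_self (Real.log (3 * α / 2))
      rw [hC₀def]
      have h0 : (0:ℝ) ≤ |Real.log (α / 2)| := abs_nonneg _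
      nlinarith
  have hlogf : Real.log (f t) = Real.log (t * f t / (1 - F t)) + Real.log (1 - F t) - Real.log t := by
    rw [Real.log_div (ne_of_gt htfpos) (ne_of_gt (hFpos t)),
      Real.log_mul (ne_of_gt ht0) (ne_of_gt hftpos)]
    ring
  rw [Real.dist_eq]
  show |(-(1 + 1 / α)) * (1 + Real.log x) - Real.log (f t) / Real.log n| < ε
  have hX0 : 0 ≤ Real.log x := Real.log_nonneg hx1
  have hXM : Real.log x ≤ Real.log M := Real.log_le_log hx0 hxM
  have hqb : |Real.log (1 - F t) / Real.log t - (-α)| < δ := by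
    have := hT₂ t (le_trans haT₂ ht_ge)
    rwa [Real.dist_eq] at this
  have := aux_bound α ε C₀ (Real.log M) δ
    (Real.log (t * f t / (1 - F t))) (Real.log (1 - F t)) (Real.log t) (Real.log n)
    (Real.log (a n)) (Real.log x)
    hα hε hC₀pos hlM.le hδ0 hδ1 (by rw [hK₀def] at hδε; exact hδε) hlogt hltpos hln
    hlogR hqb hv hX0 hXM
  rw [hlogf]
  exact this
end

section
/- Under the assumptions of the main theorem (i.i.d. X_i with F̄ regularly varying of index -α, α > 0, density f eventually non-increasing, a_n = F^{←}(1-1/n), Z_n = (X_{(n)}/a_n)^{α/log n} with density g_n), for every M > 1, (1/log n) log g_n(x) → -log x uniformly for x ∈ [1, M] as n → ∞. -/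
/-!
Write `U = 1 - F`. Since `U(2x) / U(x) → 2^{-α}`, the increments of `u ↦ log U(2^u)` tend to
`-α log 2`, so by Cesàro averaging and monotonicity `log U(x) / log x → -α`; as `U(a_n) = 1/n`,
this gives `log a_n / log n → 1/α`. By the mean value theorem and the eventual monotonicity of `f`,
`t f(t)` lies between `U(t) - U(2t)` and `2 (U(t/2) - U(t))`, each asymptotic to a constant multiple
of `U(t)`, so `log (t f(t)) / log t → -α`.

With `t = a_n x^{log n/α}` one has
`log g_n(x) = log n + log (log n/α) + (n - 1) log F(t) + log (t f(t)) - log x` and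
`log t / log n = log a_n / log n + (log x)/α`. Since `t ≥ a_n → ∞` for every `x ∈ [1, M]` and
`(n - 1) log F(t)` is bounded (as `F(t) ≥ 1 - 1/n`), after division by `log n` the terms tend,
uniformly in `x`, to `1`, `0`, `0`, `-(1 + log x)` and `0`.
-/

open Filter Topology Real Set

lemma tendsto_apply_mul_div_apply_of_eq_rpow_mul {V L : ℝ → ℝ} {ρ b : ℝ} (hb : 0 < b)
    (hV : ∀ x > 0, V x = x ^ ρ * L x) (hL : Tendsto (fun x => L (b * x) / L x) atTop (𝓝 1)) :
    Tendsto (fun x => V (b * x) / V x) atTop (𝓝 (b ^ ρ)) := by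
  refine (mul_one (b ^ ρ) ▸ hL.const_mul (b ^ ρ)).congr' ?_
  filter_upwards [eventually_gt_atTop 0] with x hx
  rw [hV x hx, hV _ (mul_pos hb hx), mul_div_mul_comm, mul_rpow hb.le hx.le,
    mul_div_cancel_right₀ _ (rpow_pos_of_pos hx ρ).ne']

lemma Antitone.tendsto_div_of_tendsto_sub {ψ : ℝ → ℝ} (hψ : Antitone ψ) {d : ℝ}
    (h : Tendsto (fun u => ψ (u + 1) - ψ u) atTop (𝓝 d)) :
    Tendsto (fun u => ψ u / u) atTop (𝓝 d) := by
  have hseq : Tendsto (fun n : ℕ => ψ n / n) atTop (𝓝 d) := by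
    have hmean := (h.comp tendsto_natCast_atTop_atTop).cesaro
    have hconst : Tendsto (fun n : ℕ => ψ 0 / n) atTop (𝓝 0) :=
      tendsto_const_div_atTop_nhds_zero_nat _
    refine (add_zero d ▸ hmean.add hconst).congr' ?_
    filter_upwards [eventually_ne_atTop 0] with n hn
    have htel := Finset.sum_range_sub (fun i : ℕ => ψ i) n
    simp only [Function.comp_apply, Nat.cast_add, Nat.cast_one] at htel ⊢
    rw [htel, Nat.cast_zero]
    field_simp
    ring
  have hround : ∀ k : ℝ → ℕ, Tendsto k atTop atTop →
      Tendsto (fun u => (k u : ℝ) / u) atTop (𝓝 1) →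
      Tendsto (fun u => ψ (k u) / u) atTop (𝓝 d) := by
    intro k hk hk_div
    refine (mul_one d ▸ (hseq.comp hk).mul hk_div).congr' ?_
    filter_upwards [hk.eventually_ne_atTop 0] with u hu
    have : (k u : ℝ) ≠ 0 := Nat.cast_ne_zero.2 hu
    simp only [Function.comp_apply]
    field_simp
  refine tendsto_of_tendsto_of_tendsto_of_le_of_le'
    (hround _ tendsto_nat_ceil_atTop tendsto_nat_ceil_div_atTop)
    (hround _ tendsto_nat_floor_atTop tendsto_nat_floor_div_atTop) ?_ ?_
  all_goals filter_upwards [eventually_gt_atTop 0] with u hu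
  · exact div_le_div_of_nonneg_right (hψ (Nat.le_ceil u)) hu.le
  · exact div_le_div_of_nonneg_right (hψ (Nat.floor_le hu.le)) hu.le

lemma Antitone.tendsto_log_div_log {U : ℝ → ℝ} (hU : Antitone U) (hpos : ∀ x > 0, 0 < U x)
    {b ρ : ℝ} (hb : 1 < b) (h : Tendsto (fun x => U (b * x) / U x) atTop (𝓝 (b ^ ρ))) :
    Tendsto (fun x => log (U x) / log x) atTop (𝓝 ρ) := by
  have hb0 : 0 < b := by linarith
  set ψ : ℝ → ℝ := fun u => log (U (b ^ u))
  have hψ : Antitone ψ := fun u v huv =>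
    log_le_log (hpos _ (rpow_pos_of_pos hb0 v)) (hU (rpow_le_rpow_of_exponent_le hb.le huv))
  have hstep : Tendsto (fun u => ψ (u + 1) - ψ u) atTop (𝓝 (ρ * log b)) := by
    have hlog := ((continuousAt_log (rpow_pos_of_pos hb0 ρ).ne').tendsto.comp h).comp
      (tendsto_rpow_atTop_of_base_gt_one b hb)
    rw [log_rpow hb0] at hlog
    refine hlog.congr fun u => ?_
    simp only [Function.comp_apply, ψ, rpow_add_one hb0.ne', mul_comm _ b]
    rw [log_div (hpos _ (by positivity)).ne' (hpos _ (by positivity)).ne']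
  have hρ := (hψ.tendsto_div_of_tendsto_sub hstep).comp (tendsto_logb_atTop hb)
  refine (mul_div_cancel_right₀ ρ (log_pos hb).ne' ▸ hρ.div_const (log b)).congr' ?_
  filter_upwards [eventually_gt_atTop 0] with x hx
  simp only [Function.comp_apply, ψ]
  rw [rpow_logb hb0 hb.ne' hx, logb, div_div, div_mul_cancel₀ _ (log_pos hb).ne']

lemma tendsto_zero_of_tendsto_log_div_log_neg {U : ℝ → ℝ} {ρ : ℝ}
    (h : Tendsto (fun x => log (U x) / log x) atTop (𝓝 ρ)) (hρ : ρ < 0)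
    (hpos : ∀ᶠ x in atTop, 0 < U x) : Tendsto U atTop (𝓝 0) := by
  have hlog : Tendsto (fun x => log (U x)) atTop atBot := by
    refine (h.neg_mul_atTop hρ tendsto_log_atTop).congr' ?_
    filter_upwards [eventually_gt_atTop 1] with x hx
    exact div_mul_cancel₀ _ (log_pos hx).ne'
  refine (tendsto_exp_atBot.comp hlog).congr' ?_
  filter_upwards [hpos] with x hx
  exact exp_log hx

lemma Antitone.tendsto_atTop_of_tendsto_zero {ι : Type*} {l : Filter ι} {U : ℝ → ℝ} {a : ι → ℝ}
    (hU : Antitone U) (hpos : ∀ x > 0, 0 < U x) (h : Tendsto (fun i => U (a i)) l (𝓝 0)) :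
    Tendsto a l atTop := by
  refine tendsto_atTop.2 fun C => ?_
  filter_upwards [h.eventually_lt_const (hpos (max C 1) (by positivity))] with i hi
  exact (le_max_left C 1).trans (hU.reflect_lt hi).le

lemma tendsto_log_div_log_of_apply_eq_one_div {U : ℝ → ℝ} {a : ℕ → ℝ} {ρ : ℝ}
    (hU : Tendsto (fun x => log (U x) / log x) atTop (𝓝 ρ)) (ha : Tendsto a atTop atTop)
    (hUa : ∀ᶠ n : ℕ in atTop, U (a n) = 1 / n) (hρ : ρ ≠ 0) :
    Tendsto (fun n : ℕ => log (a n) / log n) atTop (𝓝 (-ρ)⁻¹) := by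
  refine ((hU.comp ha).neg.inv₀ (neg_ne_zero.2 hρ)).congr' ?_
  filter_upwards [hUa] with n hn
  rw [Function.comp_apply, hn, one_div, log_inv, neg_div, neg_neg, inv_div]

lemma apply_csInf_setOf_le_eq {F : ℝ → ℝ} (hF : Continuous F) (hF_mono : Monotone F)
    {p x₀ x₁ : ℝ} (hx₀ : F x₀ < p) (hx₁ : p ≤ F x₁) : F (sInf {x | p ≤ F x}) = p := by
  set S := {x | p ≤ F x}
  have hlow : ∀ x ∈ S, x₀ ≤ x := fun x hx => (hF_mono.reflect_lt (hx₀.trans_le hx)).le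
  have hmem : sInf S ∈ S :=
    (isClosed_le continuous_const hF).csInf_mem ⟨x₁, hx₁⟩ ⟨x₀, hlow⟩
  obtain ⟨c, hc, hFc⟩ := intermediate_value_Icc (le_csInf ⟨x₁, hx₁⟩ hlow) hF.continuousOn
    ⟨hx₀.le, hmem⟩
  have hcS : c ∈ S := hFc.symm.le
  rwa [← le_antisymm hc.2 (csInf_le ⟨x₀, hlow⟩ hcS)]

lemma tendsto_log_div_log_of_tendsto_div {U V : ℝ → ℝ} {ρ c : ℝ}
    (hU : Tendsto (fun t => log (U t) / log t) atTop (𝓝 ρ))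
    (hVU : Tendsto (fun t => V t / U t) atTop (𝓝 c)) (hc : c ≠ 0) :
    Tendsto (fun t => log (V t) / log t) atTop (𝓝 ρ) := by
  have hrest : Tendsto (fun t => log (V t / U t) / log t) atTop (𝓝 0) :=
    ((continuousAt_log hc).tendsto.comp hVU).div_atTop tendsto_log_atTop
  refine (add_zero ρ ▸ hU.add hrest).congr' ?_
  filter_upwards [hVU.eventually_ne hc] with t ht
  rw [div_ne_zero_iff] at ht
  rw [log_div ht.1 ht.2]
  ring

lemma tendsto_log_div_log_of_le_of_le {V₁ V₂ W : ℝ → ℝ} {ρ : ℝ}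
    (h₁ : Tendsto (fun t => log (V₁ t) / log t) atTop (𝓝 ρ))
    (h₂ : Tendsto (fun t => log (V₂ t) / log t) atTop (𝓝 ρ))
    (hpos : ∀ᶠ t in atTop, 0 < V₁ t) (hV₁W : ∀ᶠ t in atTop, V₁ t ≤ W t)
    (hWV₂ : ∀ᶠ t in atTop, W t ≤ V₂ t) :
    Tendsto (fun t => log (W t) / log t) atTop (𝓝 ρ) := by
  refine tendsto_of_tendsto_of_tendsto_of_le_of_le' h₁ h₂ ?_ ?_
  all_goals filter_upwards [hpos, hV₁W, hWV₂, eventually_gt_atTop 1] with t h0 h₁ h₂ ht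
  · exact div_le_div_of_nonneg_right (log_le_log h0 h₁) (log_nonneg ht.le)
  · exact div_le_div_of_nonneg_right (log_le_log (h0.trans_le h₁) h₂) (log_nonneg ht.le)

lemma sub_mul_le_sub_le_sub_mul_of_antitoneOn_deriv {F f : ℝ → ℝ} {x₁ a b : ℝ}
    (hF : ∀ x, HasDerivAt F (f x) x) (hf : AntitoneOn f (Ici x₁)) (ha : x₁ ≤ a) (hab : a < b) :
    (b - a) * f b ≤ F b - F a ∧ F b - F a ≤ (b - a) * f a := by
  obtain ⟨c, hc, hslope⟩ := exists_hasDerivAt_eq_slope F f hab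
    (continuous_iff_continuousAt.2 fun x => (hF x).continuousAt).continuousOn fun x _ => hF x
  have hba : 0 < b - a := sub_pos.2 hab
  rw [eq_div_iff hba.ne'] at hslope
  rw [← hslope, mul_comm (f c)]
  have hca : a ≤ c := hc.1.le
  exact ⟨mul_le_mul_of_nonneg_left (hf (ha.trans hca) (ha.trans hab.le) hc.2.le) hba.le,
    mul_le_mul_of_nonneg_left (hf ha (ha.trans hca) hca) hba.le⟩

-- Since `log 0 = 0`, a nonzero limit forces `W t ≠ 0`.
lemma eventually_ne_zero_of_tendsto_log_div_log {W : ℝ → ℝ} {ρ : ℝ}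
    (h : Tendsto (fun t => log (W t) / log t) atTop (𝓝 ρ)) (hρ : ρ ≠ 0) :
    ∀ᶠ t in atTop, W t ≠ 0 := by
  filter_upwards [h.eventually_ne hρ] with t ht hW
  simp [hW] at ht

-- The monotone density theorem, in logarithmic form.
lemma tendsto_log_mul_deriv_div_log {F f : ℝ → ℝ} {x₁ α : ℝ} (hα : 0 < α)
    (hF : ∀ x, HasDerivAt F (f x) x) (hf : AntitoneOn f (Ici x₁)) (hF1 : ∀ x > 0, F x < 1)
    (hratio : Tendsto (fun x => (1 - F (2 * x)) / (1 - F x)) atTop (𝓝 (2 ^ (-α))))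
    (hlog : Tendsto (fun x => log (1 - F x) / log x) atTop (𝓝 (-α))) :
    Tendsto (fun t => log (t * f t) / log t) atTop (𝓝 (-α)) := by
  have h2α : (2 : ℝ) ^ (-α) < 1 := rpow_lt_one_of_one_lt_of_neg one_lt_two (neg_neg_of_pos hα)
  have h2α' : 1 < ((2 : ℝ) ^ (-α))⁻¹ := (one_lt_inv₀ (by positivity)).2 h2α
  have hlower : Tendsto (fun t => log (F (2 * t) - F t) / log t) atTop (𝓝 (-α)) := by
    refine tendsto_log_div_log_of_tendsto_div hlog ((tendsto_const_nhds.sub hratio).congr' ?_)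
      (sub_pos.2 h2α).ne'
    filter_upwards [eventually_gt_atTop 0] with t ht
    have : 1 - F t ≠ 0 := (sub_pos.2 (hF1 t ht)).ne'
    field_simp
    ring
  have hupper : Tendsto (fun t => log (2 * (F t - F (t / 2))) / log t) atTop (𝓝 (-α)) := by
    refine tendsto_log_div_log_of_tendsto_div hlog
      (((hratio.comp (tendsto_id.atTop_div_const two_pos)).inv₀ (by positivity)).sub_const 1
        |>.const_mul 2 |>.congr' ?_) (mul_ne_zero two_ne_zero (sub_pos.2 h2α').ne')
    filter_upwards [eventually_gt_atTop 0] with t ht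
    have h1 : 1 - F t ≠ 0 := (sub_pos.2 (hF1 t ht)).ne'
    have h2 : 1 - F (t / 2) ≠ 0 := (sub_pos.2 (hF1 _ (by positivity))).ne'
    simp only [Function.comp_apply, id, mul_div_cancel₀ t two_ne_zero]
    field_simp
    ring
  refine tendsto_log_div_log_of_le_of_le hlower hupper ?_ ?_ ?_
  · filter_upwards [hratio.eventually_lt_const h2α, eventually_gt_atTop 0] with t ht ht0
    rw [div_lt_one (sub_pos.2 (hF1 t ht0)), sub_lt_sub_iff_left] at ht
    exact sub_pos.2 ht
  · filter_upwards [eventually_ge_atTop x₁, eventually_gt_atTop 0] with t ht ht0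
    have h := (sub_mul_le_sub_le_sub_mul_of_antitoneOn_deriv hF hf ht (by linarith : t < 2 * t)).2
    rwa [show 2 * t - t = t by ring] at h
  · filter_upwards [eventually_ge_atTop (2 * x₁), eventually_gt_atTop 0] with t ht ht0
    have h := (sub_mul_le_sub_le_sub_mul_of_antitoneOn_deriv hF hf (by linarith : x₁ ≤ t / 2)
      (by linarith : t / 2 < t)).1
    linarith

lemma log_mul_rpow_sub_one_mul_pow_mul {n : ℕ} {a r x y z : ℝ} (hn : n ≠ 0) (hr : r ≠ 0)
    (hx : 0 < x) (hy : y ≠ 0) (hz : a * x ^ r * z ≠ 0) :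
    log (n * a * r * x ^ (r - 1) * y ^ (n - 1) * z)
      = log n + log r + (n - 1) * log y + log (a * x ^ r * z) - log x := by
  have hsplit : (n : ℝ) * a * r * x ^ (r - 1) * y ^ (n - 1) * z
      = n * r * y ^ (n - 1) * (a * x ^ r * z) / x := by
    rw [rpow_sub_one hx.ne']
    ring
  have hn' : (n : ℝ) ≠ 0 := Nat.cast_ne_zero.2 hn
  rw [hsplit, log_div (by positivity) hx.ne', log_mul (by positivity) hz,
    log_mul (by positivity) (pow_ne_zero _ hy), log_mul hn' hr, log_pow,
    Nat.cast_sub (Nat.one_le_iff_ne_zero.2 hn), Nat.cast_one]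

-- With `a = a_n`, `y = F(t)`, `z = f(t)`, each summand on the right tends to `0` uniformly in `x`.
lemma log_density_div_log_add_log_eq {n : ℕ} {α a x y z : ℝ} (hα : α ≠ 0) (hn : 2 ≤ n)
    (ha : 0 < a) (hx : 0 < x) (hy : y ≠ 0) (hz : a * x ^ (log n / α) * z ≠ 0)
    (ht : log (a * x ^ (log n / α)) ≠ 0) :
    log (n * a * (log n / α) * x ^ (log n / α - 1) * y ^ (n - 1) * z) / log n + log x
      = 1 - α * (log a / log n) + log (log n / α) / log n + (n - 1) * log y / log n
        + ((log (a * x ^ (log n / α) * z) / log (a * x ^ (log n / α)) + α) * (log a / log n)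
          + (log (a * x ^ (log n / α) * z) / log (a * x ^ (log n / α)) + α) / α * log x)
        - (log n)⁻¹ * log x := by
  have hlogn : 0 < log n := log_pos (by exact_mod_cast hn)
  have hlog_a : log a = log (a * x ^ (log n / α)) - log n / α * log x := by
    rw [log_mul ha.ne' (rpow_pos_of_pos hx _).ne', log_rpow hx]
    ring
  rw [log_mul_rpow_sub_one_mul_pow_mul (by omega) (div_ne_zero hlogn.ne' hα) hx hy hz, hlog_a]
  field_simp
  ring

lemma abs_sub_one_mul_log_le_one {n y : ℝ} (hn : 1 < n) (hy : 1 - 1 / n ≤ y) (hy1 : y ≤ 1) :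
    |(n - 1) * log y| ≤ 1 := by
  have hn0 : 0 < n - 1 := sub_pos.2 hn
  have hy0 : 0 < 1 - 1 / n := by
    rw [sub_pos, div_lt_one (by linarith)]
    exact hn
  have hlow : 1 - (1 - 1 / n)⁻¹ ≤ log y :=
    (one_sub_inv_le_log_of_pos hy0).trans (log_le_log hy0 hy)
  have hval : 1 - (1 - 1 / n)⁻¹ = -1 / (n - 1) := by
    field_simp
    ring
  rw [hval, div_le_iff₀' hn0] at hlow
  rw [abs_le]
  exact ⟨hlow, by nlinarith [log_nonpos ((hy0.le).trans hy) hy1]⟩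

lemma tendsto_sub_one_mul_log_div_log {ι : Type*} {l : Filter ι} {m : ι → ℕ} {y : ι → ℝ}
    (hm : Tendsto m l atTop) (hy : ∀ᶠ i in l, 1 - 1 / (m i : ℝ) ≤ y i ∧ y i ≤ 1) :
    Tendsto (fun i => (m i - 1) * log (y i) / log (m i)) l (𝓝 0) := by
  have hlog : Tendsto (fun i => log (m i : ℝ)) l atTop :=
    tendsto_log_atTop.comp (tendsto_natCast_atTop_atTop.comp hm)
  refine ((tendsto_inv_atTop_zero.comp hlog).zero_mul_isBoundedUnder_le
    (isBoundedUnder_of_eventually_le (a := 1) ?_)).congr fun i => inv_mul_eq_div _ _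
  filter_upwards [hy, hm.eventually_ge_atTop 2] with i hy hm
  exact abs_sub_one_mul_log_le_one (by exact_mod_cast hm) hy.1 hy.2

lemma tendsto_log_div_const_div_self {c : ℝ} (hc : 0 < c) :
    Tendsto (fun y => log (y / c) / y) atTop (𝓝 0) := by
  refine ((tendsto_pow_log_div_mul_add_atTop c 0 1 hc.ne').comp
    (tendsto_id.atTop_div_const hc)).congr fun y => ?_
  simp only [Function.comp_apply, id, pow_one, add_zero, mul_div_cancel₀ _ hc.ne']

lemma tendstoUniformlyOn_iff_tendsto_sub {ι α E : Type*} [SeminormedAddCommGroup E]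
    {F : ι → α → E} {f : α → E} {p : Filter ι} {s : Set α} :
    TendstoUniformlyOn F f p s ↔
      Tendsto (fun q : ι × α => F q.1 q.2 - f q.2) (p ×ˢ 𝓟 s) (𝓝 0) := by
  simp only [tendstoUniformlyOn_iff_tendsto, tendsto_uniformity_iff_dist_tendsto_zero,
    dist_comm (f _), dist_eq_norm, ← tendsto_zero_iff_norm_tendsto_zero]

lemma tendstoUniformlyOn_log_density_div_log {F f : ℝ → ℝ} {α M : ℝ} {a : ℕ → ℝ} {g : ℕ → ℝ → ℝ}
    (hα : 0 < α) (hF_mono : Monotone F) (hF1 : ∀ x, F x ≤ 1)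
    (ha_top : Tendsto a atTop atTop)
    (ha_log : Tendsto (fun n : ℕ => log (a n) / log n) atTop (𝓝 α⁻¹))
    (hFa : ∀ᶠ n : ℕ in atTop, 1 - 1 / (n : ℝ) ≤ F (a n))
    (hdens : Tendsto (fun t => log (t * f t) / log t) atTop (𝓝 (-α)))
    (hg : ∀ n : ℕ, ∀ x ≥ (1 : ℝ),
      g n x = (n : ℝ) * a n * (Real.log n / α) * x ^ (Real.log n / α - 1)
        * F (a n * x ^ (Real.log n / α)) ^ (n - 1)
        * f (a n * x ^ (Real.log n / α))) :
    TendstoUniformlyOn (fun n x => log (g n x) / log n) (fun x => -log x) atTop (Icc 1 M) := by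
  simp only [tendstoUniformlyOn_iff_tendsto_sub, sub_neg_eq_add]
  set l : Filter (ℕ × ℝ) := atTop ×ˢ 𝓟 (Icc 1 M)
  set t : ℕ × ℝ → ℝ := fun q => a q.1 * q.2 ^ (log q.1 / α)
  have hlogn : Tendsto (fun n : ℕ => log n) atTop atTop :=
    tendsto_log_atTop.comp tendsto_natCast_atTop_atTop
  have hx : ∀ᶠ q in l, q.2 ∈ Icc 1 M := Eventually.prod_inr (eventually_principal.2 fun _ h => h) _
  have hn : ∀ᶠ q in l, 2 ≤ q.1 ∧ 0 < a q.1 ∧ 1 - 1 / (q.1 : ℝ) ≤ F (a q.1) :=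
    Eventually.prod_inl ((eventually_ge_atTop 2).and ((ha_top.eventually_gt_atTop 0).and hFa)) _
  have ht_ge : ∀ᶠ q in l, a q.1 ≤ t q := by
    filter_upwards [hx, hn] with q hx hn
    exact le_mul_of_one_le_right hn.2.1.le (one_le_rpow hx.1 (by positivity))
  have ht : Tendsto t l atTop := tendsto_atTop_mono' l ht_ge (ha_top.comp tendsto_fst)
  have hlx : ∀ {u : ℕ × ℝ → ℝ}, Tendsto u l (𝓝 0) → Tendsto (fun q => u q * log q.2) l (𝓝 0) :=
    fun hu => hu.zero_mul_isBoundedUnder_le <| isBoundedUnder_of_eventually_le (a := log M) <| by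
      filter_upwards [hx] with q hq
      rw [Function.comp_apply, norm_of_nonneg (log_nonneg hq.1)]
      exact log_le_log (by linarith [hq.1]) hq.2
  have hinv : Tendsto (fun q : ℕ × ℝ => (log q.1)⁻¹) l (𝓝 0) :=
    (tendsto_inv_atTop_zero.comp hlogn).comp tendsto_fst
  have hla : Tendsto (fun q : ℕ × ℝ => log (a q.1) / log q.1) l (𝓝 α⁻¹) := ha_log.comp tendsto_fst
  have hW : Tendsto (fun q => log (t q * f (t q)) / log (t q) + α) l (𝓝 0) :=
    neg_add_cancel α ▸ (hdens.comp ht).add_const α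
  have hll : Tendsto (fun q : ℕ × ℝ => log (log q.1 / α) / log q.1) l (𝓝 0) :=
    (tendsto_log_div_const_div_self hα).comp (hlogn.comp tendsto_fst)
  have hFt : ∀ᶠ q in l, 1 - 1 / (q.1 : ℝ) ≤ F (t q) := by
    filter_upwards [hn, ht_ge] with q hn ht_ge
    exact hn.2.2.trans (hF_mono ht_ge)
  have hF : Tendsto (fun q : ℕ × ℝ => (q.1 - 1) * log (F (t q)) / log q.1) l (𝓝 0) :=
    tendsto_sub_one_mul_log_div_log tendsto_fst (hFt.mono fun q h => ⟨h, hF1 _⟩)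
  have hsum := (((((tendsto_const_nhds (x := (1 : ℝ))).sub (hla.const_mul α)).add hll).add hF).add
    ((hW.mul hla).add (hlx (zero_div α ▸ hW.div_const α)))).sub (hlx hinv)
  simp only [mul_inv_cancel₀ hα.ne', sub_self, zero_mul, add_zero] at hsum
  refine hsum.congr' ?_
  filter_upwards [hx, hn, hFt, ht.eventually_gt_atTop 1,
    ht.eventually (eventually_ne_zero_of_tendsto_log_div_log hdens (neg_ne_zero.2 hα.ne'))]
    with ⟨n, x⟩ hx hn hFt ht1 htf
  have hn1 : 1 / (n : ℝ) < 1 := (div_lt_one (Nat.cast_pos.2 (by omega))).2 (by exact_mod_cast hn.1)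
  rw [hg n x hx.1]
  exact (log_density_div_log_add_log_eq hα.ne' hn.1 hn.2.1 (zero_lt_one.trans_le hx.1)
    ((sub_pos.2 hn1).trans_le hFt).ne' htf (log_pos ht1).ne').symm

theorem stmt_14_general (F L f : ℝ → ℝ) (α M : ℝ) (hα : 0 < α)
    (hF_mono : Monotone F) (hF1 : ∀ x, F x ≤ 1)
    (hL_pos : ∀ x > (0 : ℝ), 0 < L x)
    (hL_slow : ∀ t > (0 : ℝ), Tendsto (fun x => L (t * x) / L x) atTop (nhds 1))
    (hFbar : ∀ x > (0 : ℝ), 1 - F x = x ^ (-α) * L x)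
    (hf : ∀ x, HasDerivAt F (f x) x)
    (hf_mono : ∃ x₁ : ℝ, AntitoneOn f (Set.Ici x₁))
    (a : ℕ → ℝ) (ha : ∀ n, a n = sInf {x : ℝ | 1 - 1 / (n : ℝ) ≤ F x})
    -- g n is the density of Z_n = (X_{(n)}/a_n)^{α/log n}
    (g : ℕ → ℝ → ℝ)
    (hg : ∀ n : ℕ, ∀ x ≥ (1 : ℝ),
      g n x = (n : ℝ) * a n * (Real.log n / α) * x ^ (Real.log n / α - 1)
        * F (a n * x ^ (Real.log n / α)) ^ (n - 1)
        * f (a n * x ^ (Real.log n / α))) :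
    TendstoUniformlyOn (fun (n : ℕ) (x : ℝ) => Real.log (g n x) / Real.log n)
      (fun x => -Real.log x) atTop (Set.Icc 1 M) := by
  obtain ⟨x₁, hf_anti⟩ := hf_mono
  have hF_cont : Continuous F := continuous_iff_continuousAt.2 fun x => (hf x).continuousAt
  have hU_anti : Antitone fun x => 1 - F x := fun x y hxy => sub_le_sub_left (hF_mono hxy) 1
  have hU_pos : ∀ x > 0, 0 < 1 - F x := fun x hx =>
    hFbar x hx ▸ mul_pos (rpow_pos_of_pos hx _) (hL_pos x hx)
  have hU_ratio := tendsto_apply_mul_div_apply_of_eq_rpow_mul two_pos hFbar (hL_slow 2 two_pos)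
  have hU_log := hU_anti.tendsto_log_div_log hU_pos one_lt_two hU_ratio
  have hU_zero := tendsto_zero_of_tendsto_log_div_log_neg hU_log (neg_neg_of_pos hα)
    ((eventually_gt_atTop 0).mono hU_pos)
  have hFa : ∀ᶠ n : ℕ in atTop, F (a n) = 1 - 1 / n := by
    filter_upwards [tendsto_one_div_atTop_nhds_zero_nat.eventually_lt_const (hU_pos 1 one_pos),
      eventually_gt_atTop 0] with n hn hn0
    obtain ⟨x, hx⟩ := (hU_zero.eventually_lt_const (by positivity : (0 : ℝ) < 1 / n)).exists
    rw [ha n]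
    exact apply_csInf_setOf_le_eq hF_cont hF_mono (lt_sub_comm.1 hn) (sub_lt_comm.1 hx).le
  have hUa : ∀ᶠ n : ℕ in atTop, 1 - F (a n) = 1 / n := hFa.mono fun n hn => by rw [hn]; ring
  have ha_top := hU_anti.tendsto_atTop_of_tendsto_zero hU_pos
    (tendsto_one_div_atTop_nhds_zero_nat.congr' (hUa.mono fun n hn => hn.symm))
  have ha_log := tendsto_log_div_log_of_apply_eq_one_div hU_log ha_top hUa (neg_ne_zero.2 hα.ne')
  rw [neg_neg] at ha_log
  have hdens := tendsto_log_mul_deriv_div_log hα hf hf_anti (fun x hx => sub_pos.1 (hU_pos x hx))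
    hU_ratio hU_log
  exact tendstoUniformlyOn_log_density_div_log hα hF_mono hF1 ha_top ha_log
    (hFa.mono fun n hn => hn.ge) hdens hg

theorem stmt_14 (F L f : ℝ → ℝ) (α M : ℝ) (hα : 0 < α) (hM : 1 < M)
    (hF_mono : Monotone F) (hF0 : ∀ x, 0 ≤ F x) (hF1 : ∀ x, F x ≤ 1)
    (hL_pos : ∀ x > (0 : ℝ), 0 < L x)
    (hL_slow : ∀ t > (0 : ℝ), Tendsto (fun x => L (t * x) / L x) atTop (nhds 1))
    (hFbar : ∀ x > (0 : ℝ), 1 - F x = x ^ (-α) * L x)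
    (hf : ∀ x, HasDerivAt F (f x) x)
    (hf_mono : ∃ x₁ : ℝ, AntitoneOn f (Set.Ici x₁))
    (a : ℕ → ℝ) (ha : ∀ n, a n = sInf {x : ℝ | 1 - 1 / (n : ℝ) ≤ F x})
    -- g n is the density of Z_n = (X_{(n)}/a_n)^{α/log n}
    (g : ℕ → ℝ → ℝ)
    (hg : ∀ n : ℕ, ∀ x ≥ (1 : ℝ),
      g n x = (n : ℝ) * a n * (Real.log n / α) * x ^ (Real.log n / α - 1)
        * F (a n * x ^ (Real.log n / α)) ^ (n - 1)
        * f (a n * x ^ (Real.log n / α))) :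
    TendstoUniformlyOn (fun (n : ℕ) (x : ℝ) => Real.log (g n x) / Real.log n)
      (fun x => -Real.log x) atTop (Set.Icc 1 M) :=
  stmt_14_general F L f α M hα hF_mono hF1 hL_pos hL_slow hFbar hf hf_mono a ha g hg
end

section
/- Let (g_n) be probability densities on [1,∞) such that for every M > 1, (1/log n) log g_n(x) → -log x uniformly on [1, M], and suppose limsup_n (1/log n) log ∫_M^∞ g_n ≤ -log M for every M ≥ 1. Then for every Borel set A ⊆ [1, ∞) of positive Lebesgue measure, lim_{n→∞} (1/log n) log ∫_A g_n(x) dx = -ess inf_{x∈A} log x. -/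
/-!
Write `L` for the essential infimum of `log` on `A`. For the lower bound, inner regularity gives
a compact `K ⊆ A ∩ (1, ∞)` of positive measure on which `log x < L + ε`; the uniform estimate then
gives `g n ≥ n ^ (-L - 2ε)` on `K`, hence `∫_A g n ≥ |K| n ^ (-L - 2ε)`. Keeping `K` away from `1`
matters: near `x = 1` the uniform estimate does not exclude `g n x = 0`. For the upper bound, pick
`M` with `log M > L`: almost everywhere on `A ∩ [1, M]` we have `g n x ≤ n ^ (-log x + ε) ≤
n ^ (-L + ε)`, and the tail hypothesis bounds `∫_{(M, ∞)} g n` by `n ^ (-L + ε)`. Since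
`log (n ^ c) / log n = c`, these polynomial bounds give the limit.
-/

open Filter MeasureTheory Real Set Topology

lemma log_div_log_le_iff {n y b : ℝ} (hn : 1 < n) (hy : 0 < y) :
    log y / log n ≤ b ↔ y ≤ n ^ b := by
  rw [div_le_iff₀ (log_pos hn), ← log_le_log_iff hy (rpow_pos_of_pos (by linarith) b),
    log_rpow (by linarith)]

lemma le_log_div_log_iff {n y b : ℝ} (hn : 1 < n) (hy : 0 < y) :
    b ≤ log y / log n ↔ n ^ b ≤ y := by
  rw [le_div_iff₀ (log_pos hn), ← log_le_log_iff (rpow_pos_of_pos (by linarith) b) hy,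
    log_rpow (by linarith)]

lemma le_rpow_of_dist_log_div_log_lt {n y a τ : ℝ} (hn : 1 < n) (hy : 0 ≤ y)
    (h : dist a (log y / log n) < τ) : y ≤ n ^ (a + τ) := by
  rcases hy.eq_or_lt with rfl | hy
  · exact rpow_nonneg (by linarith) _
  rw [Real.dist_eq] at h
  rw [← log_div_log_le_iff hn hy]
  linarith [(abs_lt.1 h).1]

/-- The condition `τ ≤ -a` rules out `y = 0`, for which `log y / log n = 0`. -/
lemma rpow_le_of_dist_log_div_log_lt {n y a τ : ℝ} (hn : 1 < n) (hy : 0 ≤ y) (hτ : τ ≤ -a)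
    (h : dist a (log y / log n) < τ) : n ^ (a - τ) ≤ y := by
  rw [Real.dist_eq] at h
  rcases hy.eq_or_lt with rfl | hy
  · simp only [log_zero, zero_div, sub_zero] at h
    linarith [neg_le_abs a]
  rw [← le_log_div_log_iff hn hy]
  linarith [(abs_lt.1 h).2]

lemma tendsto_log_div_log_of_rpow_bounds {u : ℕ → ℝ} {β : ℝ}
    (hlow : ∀ b < β, ∀ᶠ n : ℕ in atTop, (n : ℝ) ^ b ≤ u n)
    (hup : ∀ b > β, ∀ᶠ n : ℕ in atTop, u n ≤ (n : ℝ) ^ b) :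
    Tendsto (fun n : ℕ => log (u n) / log n) atTop (𝓝 β) := by
  have hn : ∀ᶠ n : ℕ in atTop, (1 : ℝ) < n :=
    (eventually_gt_atTop 1).mono fun n hn => Nat.one_lt_cast.2 hn
  refine tendsto_order.2 ⟨fun b hb => ?_, fun b hb => ?_⟩
  · obtain ⟨b', hbb', hb'β⟩ := exists_between hb
    filter_upwards [hlow b' hb'β, hn] with n hu hn
    have hpos : 0 < u n := (rpow_pos_of_pos (by linarith) b').trans_le hu
    exact hbb'.trans_le ((le_log_div_log_iff hn hpos).2 hu)
  · obtain ⟨b', hβb', hb'b⟩ := exists_between hb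
    filter_upwards [hup b' hβb', hlow (β - 1) (by linarith), hn] with n hu hu' hn
    have hpos : 0 < u n := (rpow_pos_of_pos (by linarith) _).trans_le hu'
    exact ((log_div_log_le_iff hn hpos).2 hu).trans_lt hb'b

section EssInf

variable {α : Type*} [MeasurableSpace α] {μ : Measure α}

lemma isCoboundedUnder_ge_ae (hμ : μ ≠ 0) (f : α → ℝ) :
    IsCoboundedUnder (· ≥ ·) (ae μ) f := by
  obtain ⟨k, hk⟩ : ∃ k : ℕ, μ {x | f x ≤ k} ≠ 0 := by
    by_contra! h
    refine hμ (Measure.measure_univ_eq_zero.1 (measure_mono_null ?_ (measure_iUnion_null h)))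
    exact fun x _ => mem_iUnion.2 (exists_nat_ge (f x))
  exact IsCoboundedUnder.of_frequently_le (a := (k : ℝ)) (frequently_ae_iff.2 hk)

lemma measure_lt_ne_zero_of_essInf_lt (hμ : μ ≠ 0) {f : α → ℝ} {c : ℝ}
    (hc : essInf f μ < c) : μ {x | f x < c} ≠ 0 := by
  intro h
  refine hc.not_ge (le_essInf_of_ae_le c ?_ (isCoboundedUnder_ge_ae hμ f))
  simpa only [EventuallyLE, ae_iff, not_le] using h

end EssInf

lemma exists_isCompact_subset_Ioi_measure_ne_zero {s : Set ℝ} {a : ℝ} (hs : MeasurableSet s)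
    (hsa : s ⊆ Ici a) (h : volume s ≠ 0) :
    ∃ K ⊆ s, IsCompact K ∧ K ⊆ Ioi a ∧ volume K ≠ 0 := by
  have h' : volume (s ∩ Ioi a) ≠ 0 := by
    refine fun h0 => h (measure_mono_null (fun x hx => ?_) (measure_union_null h0
      (measure_singleton a)))
    rcases (mem_Ici.1 (hsa hx)).eq_or_lt with rfl | hlt
    exacts [Or.inr rfl, Or.inl ⟨hx, hlt⟩]
  obtain ⟨K, hKs, hK, hK0⟩ :=
    (hs.inter measurableSet_Ioi).exists_lt_isCompact (pos_iff_ne_zero.2 h')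
  exact ⟨K, hKs.trans inter_subset_left, hK, hKs.trans inter_subset_right, hK0.ne'⟩

section Densities

variable {g : ℕ → ℝ → ℝ}

lemma eventually_rpow_le_setIntegral_of_isCompact (hg_nonneg : ∀ n x, 0 ≤ g n x)
    (h_unif : ∀ M > (1 : ℝ),
      TendstoUniformlyOn (fun (n : ℕ) (x : ℝ) => log (g n x) / log n)
        (fun x => -log x) atTop (Icc 1 M))
    {K : Set ℝ} (hK : IsCompact K) (hK1 : K ⊆ Ioi 1) (hK0 : volume K ≠ 0)
    (hint : ∀ n, IntegrableOn (g n) K) {c : ℝ} (hc : ∀ x ∈ K, log x ≤ c) {b : ℝ}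
    (hb : b < -c) : ∀ᶠ n : ℕ in atTop, (n : ℝ) ^ b ≤ ∫ x in K, g n x := by
  obtain ⟨x₀, hx₀K, hx₀⟩ := hK.exists_isMinOn (nonempty_of_measure_ne_zero hK0)
    continuousOn_id
  obtain ⟨M, hM⟩ := hK.bddAbove
  have hKM : K ⊆ Icc 1 M := fun x hx => ⟨(hK1 hx).le, hM hx⟩
  have hx₀1 : 1 < x₀ := hK1 hx₀K
  have hM1 : 1 < M := hx₀1.trans_le (hM hx₀K)
  set η := (-c - b) / 2 with hη
  have hη0 : 0 < η := by linarith
  have hlogx₀ : 0 < log x₀ := log_pos hx₀1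
  have hvol : 0 < volume.real K := ENNReal.toReal_pos hK0 hK.measure_lt_top.ne
  filter_upwards [Metric.tendstoUniformlyOn_iff.1 (h_unif M hM1) _ (lt_min hη0 hlogx₀),
    ((tendsto_rpow_neg_atTop hη0).comp tendsto_natCast_atTop_atTop).eventually_lt_const hvol,
    eventually_gt_atTop 1] with n hunif hsmall hn
  have hn : (1 : ℝ) < n := Nat.one_lt_cast.2 hn
  have hgK : ∀ x ∈ K, (n : ℝ) ^ (-c - η) ≤ g n x := by
    intro x hx
    have hτx : min η (log x₀) ≤ log x :=
      (min_le_right _ _).trans (log_le_log (by linarith) (isMinOn_iff.1 hx₀ x hx))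
    refine le_trans (rpow_le_rpow_of_exponent_le hn.le ?_)
      (rpow_le_of_dist_log_div_log_lt hn (hg_nonneg n x) (by linarith) (hunif x (hKM hx)))
    linarith [hc x hx, min_le_left η (log x₀)]
  calc (n : ℝ) ^ b = (n : ℝ) ^ (-η) * (n : ℝ) ^ (-c - η) := by
        rw [← rpow_add (by linarith)]; congr 1; linarith
    _ ≤ volume.real K * (n : ℝ) ^ (-c - η) := by gcongr; exact hsmall.le
    _ ≤ ∫ x in K, g n x := by
        rw [mul_comm]
        exact setIntegral_ge_of_const_le_real hK.measurableSet hK.measure_lt_top.ne hgK (hint n)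

lemma eventually_setIntegral_le_measureReal_mul_rpow (hg_nonneg : ∀ n x, 0 ≤ g n x)
    (h_unif : ∀ M > (1 : ℝ),
      TendstoUniformlyOn (fun (n : ℕ) (x : ℝ) => log (g n x) / log n)
        (fun x => -log x) atTop (Icc 1 M))
    {M : ℝ} (hM : 1 < M) {s : Set ℝ} (hs : MeasurableSet s) (hsM : s ⊆ Icc 1 M)
    (hint : ∀ n, IntegrableOn (g n) s) {L : ℝ} (hL : ∀ᵐ x ∂volume.restrict s, L ≤ log x)
    {δ : ℝ} (hδ : 0 < δ) :
    ∀ᶠ n : ℕ in atTop, ∫ x in s, g n x ≤ volume.real s * (n : ℝ) ^ (-L + δ) := by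
  filter_upwards [Metric.tendstoUniformlyOn_iff.1 (h_unif M hM) δ hδ, eventually_gt_atTop 1]
    with n hunif hn
  have hn : (1 : ℝ) < n := Nat.one_lt_cast.2 hn
  have hfin : volume s ≠ ⊤ := ((measure_mono hsM).trans_lt measure_Icc_lt_top).ne
  calc ∫ x in s, g n x ≤ ∫ _ in s, (n : ℝ) ^ (-L + δ) := by
        refine setIntegral_mono_ae_restrict (hint n) (integrableOn_const hfin) ?_
        filter_upwards [hL, ae_restrict_mem hs] with x hLx hx
        refine (le_rpow_of_dist_log_div_log_lt hn (hg_nonneg n x) (hunif x (hsM hx))).trans ?_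
        exact rpow_le_rpow_of_exponent_le hn.le (by linarith)
    _ = volume.real s * (n : ℝ) ^ (-L + δ) := by rw [setIntegral_const, smul_eq_mul]

/-- The tail integrals lie in `[0, 1]`, so their `limsup` is not a junk value. -/
lemma eventually_setIntegral_Ioi_le_rpow (hg_nonneg : ∀ n x, 0 ≤ g n x)
    (hg_prob : ∀ n, ∫ x in Ici (1 : ℝ), g n x = 1)
    (h_tail : ∀ M ≥ (1 : ℝ),
      limsup (fun n : ℕ => log (∫ x in Ioi M, g n x) / log n) atTop ≤ -log M)
    {M : ℝ} (hM : 1 ≤ M) {c : ℝ} (hc : -log M < c) :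
    ∀ᶠ n : ℕ in atTop, ∫ x in Ioi M, g n x ≤ (n : ℝ) ^ c := by
  have htail_nonneg : ∀ n, 0 ≤ ∫ x in Ioi M, g n x := fun n =>
    setIntegral_nonneg measurableSet_Ioi fun x _ => hg_nonneg n x
  have htail_le_one : ∀ n, ∫ x in Ioi M, g n x ≤ 1 := fun n => by
    have hint : IntegrableOn (g n) (Ici 1) := .of_integral_ne_zero (by simp [hg_prob n])
    rw [← hg_prob n]
    refine setIntegral_mono_set hint
      (ae_of_all _ (hg_nonneg n)) (ae_of_all _ fun x hx => ?_)
    exact hM.trans (le_of_lt hx)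
  have hbdd : IsBoundedUnder (· ≤ ·) atTop
      (fun n : ℕ => log (∫ x in Ioi M, g n x) / log n) :=
    isBoundedUnder_of ⟨0, fun n => div_nonpos_of_nonpos_of_nonneg
      (log_nonpos (htail_nonneg n) (htail_le_one n)) (log_natCast_nonneg n)⟩
  filter_upwards [eventually_lt_of_limsup_lt ((h_tail M hM).trans_lt hc) hbdd,
    eventually_gt_atTop 1] with n hlt hn
  rcases (htail_nonneg n).eq_or_lt with h0 | hpos
  · exact h0 ▸ rpow_nonneg n.cast_nonneg c
  · exact (log_div_log_le_iff (Nat.one_lt_cast.2 hn) hpos).1 hlt.le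

lemma eventually_setIntegral_le_rpow (hg_nonneg : ∀ n x, 0 ≤ g n x)
    (hg_prob : ∀ n, ∫ x in Ici (1 : ℝ), g n x = 1)
    (h_unif : ∀ M > (1 : ℝ),
      TendstoUniformlyOn (fun (n : ℕ) (x : ℝ) => log (g n x) / log n)
        (fun x => -log x) atTop (Icc 1 M))
    (h_tail : ∀ M ≥ (1 : ℝ),
      limsup (fun n : ℕ => log (∫ x in Ioi M, g n x) / log n) atTop ≤ -log M)
    {A : Set ℝ} (hA : MeasurableSet A) (hA1 : A ⊆ Ici 1) {L : ℝ}
    (hL : ∀ᵐ x ∂volume.restrict A, L ≤ log x) {b : ℝ} (hb : -L < b) :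
    ∀ᶠ n : ℕ in atTop, ∫ x in A, g n x ≤ (n : ℝ) ^ b := by
  have hint : ∀ n, IntegrableOn (g n) (Ici 1) := fun n =>
    .of_integral_ne_zero (by simp [hg_prob n])
  set δ := (b + L) / 2 with hδ
  have hδ0 : 0 < δ := by linarith
  set M := exp (|L| + 1)
  have hM : 1 < M := one_lt_exp_iff.2 (by positivity)
  have hlogM : -log M < -L + δ := by
    rw [log_exp]; linarith [le_abs_self L]
  have hAM : A ∩ Iic M ⊆ Icc 1 M := fun x hx => ⟨hA1 hx.1, hx.2⟩
  filter_upwards [eventually_setIntegral_le_measureReal_mul_rpow hg_nonneg h_unif hM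
      (hA.inter measurableSet_Iic) hAM (fun n => (hint n).mono_set (inter_subset_left.trans hA1))
      (ae_restrict_of_ae_restrict_of_subset inter_subset_left hL) hδ0,
    eventually_setIntegral_Ioi_le_rpow hg_nonneg hg_prob h_tail hM.le hlogM,
    ((tendsto_rpow_atTop hδ0).comp tendsto_natCast_atTop_atTop).eventually_ge_atTop
      (volume.real (A ∩ Iic M) + 1), eventually_gt_atTop 0]
    with n hbody htail hconst hn
  have hn : (0 : ℝ) < n := Nat.cast_pos.2 hn
  have htail' : ∫ x in A \ Iic M, g n x ≤ ∫ x in Ioi M, g n x :=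
    setIntegral_mono_set ((hint n).mono_set fun x hx => hM.le.trans hx.le)
      (ae_of_all _ (hg_nonneg n)) (ae_of_all _ fun x hx => not_le.1 hx.2)
  calc ∫ x in A, g n x
      = (∫ x in A ∩ Iic M, g n x) + ∫ x in A \ Iic M, g n x :=
        (integral_inter_add_sdiff measurableSet_Iic ((hint n).mono_set hA1)).symm
    _ ≤ (volume.real (A ∩ Iic M) + 1) * (n : ℝ) ^ (-L + δ) := by rw [add_one_mul]; linarith
    _ ≤ (n : ℝ) ^ δ * (n : ℝ) ^ (-L + δ) := by gcongr; exact hconst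
    _ = (n : ℝ) ^ b := by rw [← rpow_add hn]; congr 1; linarith

lemma eventually_rpow_le_setIntegral (hg_nonneg : ∀ n x, 0 ≤ g n x)
    (hg_prob : ∀ n, ∫ x in Ici (1 : ℝ), g n x = 1)
    (h_unif : ∀ M > (1 : ℝ),
      TendstoUniformlyOn (fun (n : ℕ) (x : ℝ) => log (g n x) / log n)
        (fun x => -log x) atTop (Icc 1 M))
    {A : Set ℝ} (hA : MeasurableSet A) (hA1 : A ⊆ Ici 1) {L : ℝ}
    (hL : ∀ c > L, volume (A ∩ {x | log x < c}) ≠ 0) {b : ℝ} (hb : b < -L) :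
    ∀ᶠ n : ℕ in atTop, (n : ℝ) ^ b ≤ ∫ x in A, g n x := by
  have hint : ∀ n, IntegrableOn (g n) (Ici 1) := fun n =>
    .of_integral_ne_zero (by simp [hg_prob n])
  obtain ⟨c, hLc, hcb⟩ := exists_between (lt_neg_of_lt_neg hb)
  obtain ⟨K, hKS, hK, hK1, hK0⟩ := exists_isCompact_subset_Ioi_measure_ne_zero
    (hA.inter (measurableSet_lt measurable_log measurable_const))
    (inter_subset_left.trans hA1) (hL c hLc)
  have hKA : K ⊆ A := hKS.trans inter_subset_left
  filter_upwards [eventually_rpow_le_setIntegral_of_isCompact hg_nonneg h_unif hK hK1 hK0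
    (fun n => (hint n).mono_set (hKA.trans hA1)) (fun x hx => (hKS hx).2.le)
    (lt_neg_of_lt_neg hcb)] with n hn
  exact hn.trans (setIntegral_mono_set ((hint n).mono_set hA1) (ae_of_all _ (hg_nonneg n))
    (ae_of_all _ hKA))

end Densities

theorem stmt_15_general (g : ℕ → ℝ → ℝ)
    (hg_nonneg : ∀ n x, 0 ≤ g n x)
    (hg_prob : ∀ n, ∫ x in Set.Ici (1 : ℝ), g n x = 1)
    (h_unif : ∀ M > (1 : ℝ),
      TendstoUniformlyOn (fun (n : ℕ) (x : ℝ) => Real.log (g n x) / Real.log n)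
        (fun x => -Real.log x) atTop (Set.Icc 1 M))
    (h_tail : ∀ M ≥ (1 : ℝ),
      limsup (fun n : ℕ => Real.log (∫ x in Set.Ioi M, g n x) / Real.log n) atTop
        ≤ -Real.log M) :
    ∀ A : Set ℝ, MeasurableSet A → A ⊆ Set.Ici 1 → 0 < volume A →
      Tendsto (fun n : ℕ => Real.log (∫ x in A, g n x) / Real.log n) atTop
        (nhds (-essInf (fun x => Real.log x) (volume.restrict A))) := by
  intro A hA hA1 hApos
  have hμ : volume.restrict A ≠ 0 := by simpa [Measure.restrict_eq_zero] using hApos.ne'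
  refine tendsto_log_div_log_of_rpow_bounds
    (fun b hb => eventually_rpow_le_setIntegral hg_nonneg hg_prob h_unif hA hA1 ?_ hb)
    (fun b hb => eventually_setIntegral_le_rpow hg_nonneg hg_prob h_unif h_tail hA hA1 ?_ hb)
  · intro c hc
    simpa [Measure.restrict_apply' hA, inter_comm] using measure_lt_ne_zero_of_essInf_lt hμ hc
  · exact ae_essInf_le ⟨0, (ae_restrict_iff' hA).2 (ae_of_all _ fun x hx => log_nonneg (hA1 hx))⟩

theorem stmt_15 (g : ℕ → ℝ → ℝ)
    (hg_nonneg : ∀ n x, 0 ≤ g n x)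
    (hg_meas : ∀ n, Measurable (g n))
    (hg_prob : ∀ n, ∫ x in Set.Ici (1 : ℝ), g n x = 1)
    (h_unif : ∀ M > (1 : ℝ),
      TendstoUniformlyOn (fun (n : ℕ) (x : ℝ) => Real.log (g n x) / Real.log n)
        (fun x => -Real.log x) atTop (Set.Icc 1 M))
    (h_tail : ∀ M ≥ (1 : ℝ),
      limsup (fun n : ℕ => Real.log (∫ x in Set.Ioi M, g n x) / Real.log n) atTop
        ≤ -Real.log M) :
    ∀ A : Set ℝ, MeasurableSet A → A ⊆ Set.Ici 1 → 0 < volume A →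
      Tendsto (fun n : ℕ => Real.log (∫ x in A, g n x) / Real.log n) atTop
        (nhds (-essInf (fun x => Real.log x) (volume.restrict A))) :=
  stmt_15_general g hg_nonneg hg_prob h_unif h_tail
end

section
/- Under the assumptions of the main theorem, for any β > 0, lim_{n→∞} (1/log n) log P(X_{(n)} > a_n n^β) = -αβ; equivalently P(X_{(n)} > a_n n^β) = n^{-αβ + o(1)}. -/
/-!
Write `Ḡ = 1 - F`. Since `P(X₍ₙ₎ > t) = 1 - (1 - Ḡ t)ⁿ` lies between `n Ḡ(t) / 2` and `n Ḡ(t)`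
once `n Ḡ(t) ≤ 1`, everything reduces to `log Ḡ(aₙ n^β)`. The quantile satisfies
`Ḡ(2aₙ) ≤ 1/n < Ḡ(aₙ/2)`, and a Potter-type bound
`|log Ḡ z - log Ḡ y + α log (z/y)| ≤ ε log (z/y) + C` for large `y ≤ z`, obtained by telescoping
`Ḡ(e x) / Ḡ x → e^(-α)` along powers of `e` and using the monotonicity of `Ḡ` in between, gives
`log Ḡ(aₙ n^β) = -(1 + αβ) log n + o(log n)`.
-/

open Filter MeasureTheory ProbabilityTheory Real Set Topology

theorem abs_sub_le_mul_logb_add {h : ℝ → ℝ} {t x₀ ε C : ℝ} (ht : 1 < t) (hx₀ : 0 < x₀)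
    (hstep : ∀ x ≥ x₀, |h (t * x) - h x| ≤ ε)
    (hlocal : ∀ y ≥ x₀, ∀ z ∈ Icc y (t * y), |h z - h y| ≤ C) {y z : ℝ} (hy : x₀ ≤ y)
    (hyz : y ≤ z) : |h z - h y| ≤ ε * logb t (z / y) + C := by
  have hblock : ∀ k : ℕ, ∀ y ≥ x₀, ∀ z ∈ Icc (t ^ k * y) (t ^ (k + 1) * y),
      |h z - h y| ≤ ε * k + C := by
    intro k
    induction k with
    | zero => simpa using hlocal
    | succ k ih =>
      intro y hy z hz
      have hty : x₀ ≤ t * y := hy.trans (le_mul_of_one_le_left (hx₀.le.trans hy) ht.le)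
      have hz' : z ∈ Icc (t ^ k * (t * y)) (t ^ (k + 1) * (t * y)) := by
        simpa only [pow_succ, mul_assoc] using hz
      calc |h z - h y| ≤ |h z - h (t * y)| + |h (t * y) - h y| := abs_sub_le _ _ _
        _ ≤ (ε * k + C) + ε := add_le_add (ih _ hty z hz') (hstep y hy)
        _ = ε * ↑(k + 1) + C := by push_cast; ring
  have hy0 : 0 < y := hx₀.trans_le hy
  obtain ⟨k, hk, hk'⟩ := exists_nat_pow_near ((one_le_div hy0).2 hyz) ht
  have hε : 0 ≤ ε := (abs_nonneg _).trans (hstep x₀ le_rfl)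
  have hk_le : (k : ℝ) ≤ logb t (z / y) := by
    rw [le_logb_iff_rpow_le ht (div_pos (hy0.trans_le hyz) hy0), rpow_natCast]
    exact hk
  calc |h z - h y| ≤ ε * k + C :=
        hblock k y hy z ⟨(le_div_iff₀ hy0).1 hk, ((div_lt_iff₀ hy0).1 hk').le⟩
    _ ≤ ε * logb t (z / y) + C := by gcongr

theorem tendsto_div_of_abs_sub_mul_le {ι : Type*} {l : Filter ι} {u v : ι → ℝ} {c : ℝ}
    (hv : Tendsto v l atTop) (h : ∀ ε > 0, ∃ C, ∀ᶠ i in l, |u i - c * v i| ≤ ε * v i + C) :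
    Tendsto (fun i => u i / v i) l (𝓝 c) := by
  refine Metric.tendsto_nhds.2 fun δ hδ => ?_
  obtain ⟨C, hC⟩ := h (δ / 2) (half_pos hδ)
  filter_upwards [hC, hv.eventually_gt_atTop (max 0 (2 * C / δ))] with i hi hvi
  have hv0 : 0 < v i := (le_max_left _ _).trans_lt hvi
  have hCv : C < δ / 2 * v i := by
    have := (le_max_right _ _).trans_lt hvi
    rw [div_lt_iff₀ hδ] at this
    linarith
  rw [Real.dist_eq, div_sub' hv0.ne', abs_div, abs_of_pos hv0, div_lt_iff₀ hv0, mul_comm]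
  linarith

theorem mul_div_two_le_one_sub_one_sub_pow {u : ℝ} (hu : 0 ≤ u) {n : ℕ} (hnu : n * u ≤ 1) :
    n * u / 2 ≤ 1 - (1 - u) ^ n := by
  rcases Nat.eq_zero_or_pos n with rfl | hn
  · simp
  have hu1 : u ≤ 1 := le_trans (le_mul_of_one_le_left hu (by exact_mod_cast hn)) hnu
  -- `(1 - u)ⁿ (1 + n u) ≤ (1 - u)ⁿ (1 + u)ⁿ ≤ 1`, and `1 / (1 + x) ≤ 1 - x / 2` for `x ≤ 1`
  have hprod : (1 - u) ^ n * (1 + u) ^ n ≤ 1 := by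
    rw [← mul_pow]
    exact pow_le_one₀ (by nlinarith) (by nlinarith)
  have hbern : 1 + n * u ≤ (1 + u) ^ n := one_add_mul_le_pow (by linarith) n
  have h0 : 0 ≤ (1 - u) ^ n := pow_nonneg (by linarith) n
  nlinarith [mul_le_mul_of_nonneg_left hbern h0, mul_nonneg hu (Nat.cast_nonneg n : (0:ℝ) ≤ n)]

theorem one_sub_one_sub_pow_le {u : ℝ} (hu : u ≤ 2) (n : ℕ) : 1 - (1 - u) ^ n ≤ n * u := by
  have := one_add_mul_le_pow (show -2 ≤ -u by linarith) n
  rw [← sub_eq_add_neg] at this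
  linarith

theorem abs_log_one_sub_one_sub_pow_sub_le {u : ℝ} (hu : 0 < u) {n : ℕ} (hn : n ≠ 0)
    (hnu : n * u ≤ 1) : |log (1 - (1 - u) ^ n) - (log n + log u)| ≤ log 2 := by
  have hn1 : (1 : ℝ) ≤ n := by exact_mod_cast Nat.one_le_iff_ne_zero.2 hn
  have hnu0 : 0 < n * u := by positivity
  have hlo := mul_div_two_le_one_sub_one_sub_pow hu.le hnu
  have hhi := one_sub_one_sub_pow_le (u := u) (by nlinarith) n
  have hlog_lo := log_le_log (by positivity) hlo
  have hlog_hi := log_le_log (by linarith) hhi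
  rw [log_div hnu0.ne' two_ne_zero, log_mul (by positivity : (n : ℝ) ≠ 0) hu.ne'] at hlog_lo
  rw [log_mul (by positivity : (n : ℝ) ≠ 0) hu.ne'] at hlog_hi
  exact abs_le.2 ⟨by linarith, by linarith [log_pos one_lt_two]⟩

def RegularlyVarying (G : ℝ → ℝ) (ρ : ℝ) : Prop :=
  ∀ t > 0, Tendsto (fun x => G (t * x) / G x) atTop (𝓝 (t ^ ρ))

theorem regularlyVarying_rpow_mul {L : ℝ → ℝ} (hL_pos : ∀ x > 0, 0 < L x)
    (hL : ∀ t > 0, Tendsto (fun x => L (t * x) / L x) atTop (𝓝 1)) {G : ℝ → ℝ} {ρ : ℝ}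
    (hG : ∀ x > 0, G x = x ^ ρ * L x) : RegularlyVarying G ρ := by
  intro t ht
  have := (hL t ht).const_mul (t ^ ρ)
  rw [mul_one] at this
  refine this.congr' ?_
  filter_upwards [eventually_gt_atTop 0] with x hx
  have := (hL_pos x hx).ne'
  have := (rpow_pos_of_pos hx ρ).ne'
  rw [hG x hx, hG _ (mul_pos ht hx), mul_rpow ht.le hx.le]
  field_simp

theorem RegularlyVarying.tendsto_log_sub {G : ℝ → ℝ} {ρ : ℝ} (hG : RegularlyVarying G ρ)
    (hpos : ∀ x, 0 < G x) {t : ℝ} (ht : 0 < t) :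
    Tendsto (fun x => log (G (t * x)) - log (G x)) atTop (𝓝 (ρ * log t)) := by
  have := ((continuousAt_log (rpow_pos_of_pos ht ρ).ne').tendsto).comp (hG t ht)
  rw [log_rpow ht] at this
  exact this.congr fun x => log_div (hpos _).ne' (hpos _).ne'

theorem RegularlyVarying.exists_abs_log_sub_le {G : ℝ → ℝ} {ρ : ℝ} (hG : RegularlyVarying G ρ)
    (hpos : ∀ x, 0 < G x) (hanti : Antitone G) {ε : ℝ} (hε : 0 < ε) :
    ∃ x₀ C, 0 < x₀ ∧ ∀ y z, x₀ ≤ y → y ≤ z →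
      |log (G z) - log (G y) - ρ * log (z / y)| ≤ ε * log (z / y) + C := by
  set h : ℝ → ℝ := fun x => log (G x) - ρ * log x
  have he : 1 < exp 1 := one_lt_exp_iff.2 one_pos
  obtain ⟨x₁, hx₁⟩ := eventually_atTop.1 <|
    (hG.tendsto_log_sub hpos (exp_pos 1)).eventually (Metric.closedBall_mem_nhds _ hε)
  rw [log_exp, mul_one] at hx₁
  have hlog_ratio : ∀ {y z : ℝ}, 0 < y → 0 < z →
      h z - h y = log (G z) - log (G y) - ρ * log (z / y) := fun hy hz => by
    simp only [h, log_div hz.ne' hy.ne']; ring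
  have hstep : ∀ x ≥ max x₁ 1, |h (exp 1 * x) - h x| ≤ ε := fun x hx => by
    have hx0 : 0 < x := one_pos.trans_le (le_of_max_le_right hx)
    rw [hlog_ratio hx0 (by positivity), mul_div_assoc, div_self hx0.ne', mul_one, log_exp,
      mul_one, ← Real.dist_eq]
    exact hx₁ x (le_of_max_le_left hx)
  have hlocal : ∀ y ≥ max x₁ 1, ∀ z ∈ Icc y (exp 1 * y), |h z - h y| ≤ ε + 2 * |ρ| := by
    rintro y hy z ⟨hyz, hzy⟩
    have hy0 : 0 < y := one_pos.trans_le (le_of_max_le_right hy)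
    have hz0 : 0 < z := hy0.trans_le hyz
    have hlogzy : 0 ≤ log (z / y) ∧ log (z / y) ≤ 1 := by
      refine ⟨log_nonneg ((one_le_div hy0).2 hyz), ?_⟩
      rw [← log_exp 1]
      exact log_le_log (div_pos hz0 hy0) ((div_le_iff₀ hy0).2 hzy)
    have hGz : log (G (exp 1 * y)) ≤ log (G z) ∧ log (G z) ≤ log (G y) :=
      ⟨log_le_log (hpos _) (hanti hzy), log_le_log (hpos _) (hanti hyz)⟩
    have hGe := abs_le.1 (hstep y hy)
    rw [hlog_ratio hy0 (by positivity), mul_div_assoc, div_self hy0.ne', mul_one, log_exp,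
      mul_one] at hGe
    rw [hlog_ratio hy0 hz0]
    have hρℓ : |ρ * log (z / y)| ≤ |ρ| := by
      rw [abs_mul]
      exact mul_le_of_le_one_right (abs_nonneg _) (abs_le.2 ⟨by linarith, hlogzy.2⟩)
    have hA : |log (G z) - log (G y)| ≤ ε + |ρ| :=
      abs_le.2 ⟨by linarith [neg_abs_le ρ], by linarith [abs_nonneg ρ]⟩
    linarith [abs_sub (log (G z) - log (G y)) (ρ * log (z / y))]
  refine ⟨max x₁ 1, ε + 2 * |ρ|, lt_max_of_lt_right one_pos, fun y z hy hyz => ?_⟩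
  have hy0 : 0 < y := one_pos.trans_le (le_of_max_le_right hy)
  have := abs_sub_le_mul_logb_add he (lt_max_of_lt_right one_pos) hstep hlocal hy hyz
  rwa [hlog_ratio hy0 (hy0.trans_le hyz), logb, log_exp, div_one] at this

theorem RegularlyVarying.abs_log_quantile_mul_rpow_le {G : ℝ → ℝ} {α β : ℝ}
    (hG : RegularlyVarying G (-α)) (hpos : ∀ x, 0 < G x) (hanti : Antitone G) (hβ : 0 < β)
    {a : ℕ → ℝ} (ha : Tendsto a atTop atTop) (ha_lo : ∀ᶠ n : ℕ in atTop, ∀ x < a n, 1 / n < G x)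
    (ha_hi : ∀ᶠ n : ℕ in atTop, ∀ x > a n, G x ≤ 1 / n) {ε : ℝ} (hε : 0 < ε) :
    ∃ K, ∀ᶠ n : ℕ in atTop, |log (G (a n * n ^ β)) + (1 + α * β) * log n| ≤ ε * log n + K := by
  set ε' := ε / β
  obtain ⟨x₀, C, hx₀, hpotter⟩ := hG.exists_abs_log_sub_le hpos hanti (ε := ε') (by positivity)
  have hnβ : Tendsto (fun n : ℕ => (n : ℝ) ^ β) atTop atTop :=
    (tendsto_rpow_atTop hβ).comp tendsto_natCast_atTop_atTop
  refine ⟨C + (|α| + ε') * log 2, ?_⟩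
  filter_upwards [ha_lo, ha_hi, ha.eventually_ge_atTop (2 * x₀), hnβ.eventually_ge_atTop 2,
    eventually_gt_atTop 0] with n hlo hhi han hnβ hn
  have hn0 : (0 : ℝ) < n := by exact_mod_cast hn
  have ha0 : 0 < a n := by linarith
  have hlog2 := log_pos one_lt_two
  have hy : log (G (a n / 2)) > -log n := by
    rw [← log_inv, ← one_div]
    exact log_lt_log (by positivity) (hlo _ (by linarith))
  have hw : log (G (2 * a n)) ≤ -log n := by
    rw [← log_inv, ← one_div]
    exact log_le_log (hpos _) (hhi _ (by linarith))
  have hzy : log (a n * n ^ β / (a n / 2)) = β * log n + log 2 := by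
    rw [show a n * n ^ β / (a n / 2) = n ^ β * 2 by field_simp, log_mul (by positivity)
      two_ne_zero, log_rpow hn0]
  have hzw : log (a n * n ^ β / (2 * a n)) = β * log n - log 2 := by
    rw [show a n * n ^ β / (2 * a n) = n ^ β / 2 by field_simp, log_div (by positivity)
      two_ne_zero, log_rpow hn0]
  have h₁ := abs_le.1 (hpotter (a n / 2) (a n * n ^ β) (by linarith) (by nlinarith))
  have h₂ := abs_le.1 (hpotter (2 * a n) (a n * n ^ β) (by linarith) (by nlinarith))
  rw [hzy] at h₁
  rw [hzw] at h₂
  have hε' : ε' * β * log n = ε * log n := by rw [div_mul_cancel₀ ε hβ.ne']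
  have hα2 := abs_le.1 (le_of_eq (abs_mul α (log 2)))
  rw [abs_of_pos hlog2] at hα2
  have hε'2 : 0 ≤ ε' * log 2 := by positivity
  exact abs_le.2 ⟨by linarith, by linarith⟩

theorem Monotone.le_of_sInf_setOf_le_lt {F : ℝ → ℝ} (hF : Monotone F) {c x : ℝ}
    (hne : {x | c ≤ F x}.Nonempty) (hx : sInf {x | c ≤ F x} < x) : c ≤ F x := by
  obtain ⟨s, hs, hsx⟩ := exists_lt_of_csInf_lt hne hx
  exact hs.trans (hF hsx.le)

theorem bddBelow_setOf_le_of_tendsto {F : ℝ → ℝ}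
    (hF_bot : Tendsto F atBot (𝓝 0)) {c : ℝ} (hc : 0 < c) : BddBelow {x | c ≤ F x} := by
  obtain ⟨M, hM⟩ := eventually_atBot.1 (hF_bot.eventually (eventually_lt_nhds hc))
  exact ⟨M, fun x hx => le_of_not_gt fun hxM => (hM x hxM.le).not_ge hx⟩

theorem nonempty_setOf_le_of_tendsto {F : ℝ → ℝ} (hF_top : Tendsto F atTop (𝓝 1)) {c : ℝ}
    (hc : c < 1) : {x | c ≤ F x}.Nonempty :=
  (hF_top.eventually (eventually_ge_nhds hc)).exists

theorem Monotone.tendsto_sInf_setOf_le_atTop {F : ℝ → ℝ} (hF : Monotone F)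
    (hF_lt : ∀ x, F x < 1) (hF_top : Tendsto F atTop (𝓝 1)) :
    Tendsto (fun n : ℕ => sInf {x | 1 - 1 / (n : ℝ) ≤ F x}) atTop atTop := by
  have hc : Tendsto (fun n : ℕ => 1 - 1 / (n : ℝ)) atTop (𝓝 1) := by
    simpa using tendsto_const_nhds.sub (tendsto_one_div_atTop_nhds_zero_nat (𝕜 := ℝ))
  refine tendsto_atTop.2 fun M => ?_
  filter_upwards [hc.eventually (eventually_gt_nhds (hF_lt M)),
    eventually_gt_atTop 0] with n hn hn0
  by_contra! h
  have hne := nonempty_setOf_le_of_tendsto hF_top (c := 1 - 1 / (n : ℝ)) (by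
    have : (0 : ℝ) < n := by exact_mod_cast hn0
    linarith [one_div_pos.2 this])
  exact (hF.le_of_sInf_setOf_le_lt hne h).not_gt hn

theorem ProbabilityTheory.iIndepFun.measure_lt_iSup_eq {Ω : Type*} [MeasurableSpace Ω]
    {μ : Measure Ω} [IsProbabilityMeasure μ] {X : ℕ → Ω → ℝ} (hX_indep : iIndepFun X μ)
    (hX_ident : ∀ i, IdentDistrib (X i) (X 0) μ μ) {n : ℕ} (hn : n ≠ 0) (t : ℝ) :
    μ {ω | t < ⨆ i : Fin n, X i ω} = 1 - μ {ω | X 0 ω ≤ t} ^ n := by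
  have : Nonempty (Fin n) := ⟨⟨0, Nat.pos_of_ne_zero hn⟩⟩
  have hset : {ω | t < ⨆ i : Fin n, X i ω} = (⋂ i ∈ Finset.range n, X i ⁻¹' Iic t)ᶜ := by
    ext ω
    simp [lt_ciSup_iff (finite_range _).bddAbove, Fin.exists_iff]
  have hmeas : NullMeasurableSet (⋂ i ∈ Finset.range n, X i ⁻¹' Iic t) μ :=
    .biInter (Finset.range n).countable_toSet fun i _ =>
      (hX_ident i).aemeasurable_fst.nullMeasurableSet_preimage measurableSet_Iic
  rw [hset, measure_compl₀ hmeas (measure_ne_top μ _), measure_univ,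
    hX_indep.measure_inter_preimage_eq_mul _ fun _ _ => measurableSet_Iic,
    Finset.prod_congr rfl fun i _ => (hX_ident i).measure_mem_eq measurableSet_Iic,
    Finset.prod_const, Finset.card_range]
  rfl

theorem Monotone.tendsto_log_one_sub_pow_quantile_div_log {F : ℝ → ℝ} {α β : ℝ} (hβ : 0 < β)
    (hF : Monotone F) (hF_lt : ∀ x, F x < 1) (hF_bot : Tendsto F atBot (𝓝 0))
    (hF_top : Tendsto F atTop (𝓝 1)) (hG : RegularlyVarying (fun x => 1 - F x) (-α)) :
    Tendsto (fun n : ℕ => log (1 - F (sInf {x | 1 - 1 / (n : ℝ) ≤ F x} * n ^ β) ^ n) / log n)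
      atTop (𝓝 (-(α * β))) := by
  set a : ℕ → ℝ := fun n => sInf {x | 1 - 1 / (n : ℝ) ≤ F x}
  have hGpos : ∀ x, 0 < 1 - F x := fun x => sub_pos.2 (hF_lt x)
  have hGanti : Antitone fun x => 1 - F x := fun x y hxy => sub_le_sub_left (hF hxy) 1
  have ha : Tendsto a atTop atTop := hF.tendsto_sInf_setOf_le_atTop hF_lt hF_top
  have ha_lo : ∀ᶠ n : ℕ in atTop, ∀ x < a n, 1 / n < 1 - F x := by
    filter_upwards [eventually_gt_atTop 1] with n hn x hx
    have hn1 : 1 / (n : ℝ) < 1 := (div_lt_one (by positivity)).2 (by exact_mod_cast hn)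
    have := notMem_of_lt_csInf hx (bddBelow_setOf_le_of_tendsto hF_bot (sub_pos.2 hn1))
    simp only [mem_ofPred_eq, not_le] at this
    linarith
  have ha_hi : ∀ᶠ n : ℕ in atTop, ∀ x > a n, 1 - F x ≤ 1 / n := by
    filter_upwards [eventually_gt_atTop 0] with n hn x hx
    have hne := nonempty_setOf_le_of_tendsto hF_top (c := 1 - 1 / (n : ℝ)) (by
      simp only [sub_lt_self_iff, one_div, inv_pos, Nat.cast_pos, hn])
    linarith [hF.le_of_sInf_setOf_le_lt hne hx]
  refine tendsto_div_of_abs_sub_mul_le (tendsto_log_atTop.comp tendsto_natCast_atTop_atTop)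
    fun ε hε => ?_
  obtain ⟨K, hK⟩ := hG.abs_log_quantile_mul_rpow_le hGpos hGanti hβ ha ha_lo ha_hi hε
  refine ⟨K + log 2, ?_⟩
  filter_upwards [hK, ha_hi, ha.eventually_gt_atTop 0, eventually_gt_atTop 1] with n hK ha_hi ha0 hn
  have hn1 : (1 : ℝ) < n := by exact_mod_cast hn
  have hz := ha_hi (a n * n ^ β) (lt_mul_of_one_lt_right ha0 (one_lt_rpow hn1 hβ))
  have hP := abs_log_one_sub_one_sub_pow_sub_le (hGpos (a n * n ^ β)) (n := n) (by omega)
    (by rwa [← le_div_iff₀' (by linarith)])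
  rw [sub_sub_cancel] at hP
  obtain ⟨hP₁, hP₂⟩ := abs_le.1 hP
  obtain ⟨hK₁, hK₂⟩ := abs_le.1 hK
  exact abs_le.2 ⟨by linarith, by linarith⟩

theorem stmt_17_general {Ω : Type*} [MeasurableSpace Ω] (μ : Measure Ω) [IsProbabilityMeasure μ]
    (X : ℕ → Ω → ℝ)
    (hX_indep : iIndepFun X μ)
    (hX_ident : ∀ i, IdentDistrib (X i) (X 0) μ μ)
    (L : ℝ → ℝ) (α : ℝ)
    (hL_pos : ∀ x > (0 : ℝ), 0 < L x)
    (hL_slow : ∀ t > (0 : ℝ), Tendsto (fun x => L (t * x) / L x) atTop (nhds 1))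
    (F : ℝ → ℝ) (hF : ∀ x, F x = (μ {ω | X 0 ω ≤ x}).toReal)
    (hFbar : ∀ x > (0 : ℝ), 1 - F x = x ^ (-α) * L x)
    (a : ℕ → ℝ) (ha : ∀ n, a n = sInf {x : ℝ | 1 - 1 / (n : ℝ) ≤ F x}) :
    ∀ β > (0 : ℝ),
      Tendsto (fun n : ℕ =>
          Real.log (μ {ω | a n * (n : ℝ) ^ β < ⨆ i : Fin n, X i ω}).toReal / Real.log n)
        atTop (nhds (-(α * β))) := by
  intro β hβ
  have hX₀ := (hX_ident 0).aemeasurable_fst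
  have := Measure.isProbabilityMeasure_map hX₀
  have hF_cdf : F = cdf (μ.map (X 0)) := funext fun x => by
    rw [hF, cdf_eq_real, measureReal_def, Measure.map_apply_of_aemeasurable hX₀ measurableSet_Iic]
    rfl
  have hF_lt : ∀ x, F x < 1 := fun x => by
    have hx : (0 : ℝ) < max x 1 := lt_max_of_lt_right one_pos
    have := hFbar _ hx
    have := mul_pos (rpow_pos_of_pos hx (-α)) (hL_pos _ hx)
    have hmono : F x ≤ F (max x 1) := hF_cdf ▸ monotone_cdf _ (le_max_left x 1)
    linarith
  have hlim := (hF_cdf ▸ monotone_cdf _).tendsto_log_one_sub_pow_quantile_div_log hβ hF_lt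
    (hF_cdf ▸ tendsto_cdf_atBot _) (hF_cdf ▸ tendsto_cdf_atTop _)
    (regularlyVarying_rpow_mul hL_pos hL_slow hFbar)
  refine hlim.congr' ?_
  filter_upwards [eventually_ne_atTop 0] with n hn
  rw [ha, hX_indep.measure_lt_iSup_eq hX_ident hn, ENNReal.toReal_sub_of_le
    (pow_le_one₀ zero_le prob_le_one) ENNReal.one_ne_top, ENNReal.toReal_pow, ← hF]
  rfl

theorem stmt_17 {Ω : Type*} [MeasurableSpace Ω] (μ : Measure Ω) [IsProbabilityMeasure μ]
    (X : ℕ → Ω → ℝ) (hX_meas : ∀ i, Measurable (X i))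
    (hX_indep : iIndepFun X μ)
    (hX_ident : ∀ i, IdentDistrib (X i) (X 0) μ μ)
    (L : ℝ → ℝ) (α : ℝ) (hα : 0 < α)
    (hL_pos : ∀ x > (0 : ℝ), 0 < L x)
    (hL_slow : ∀ t > (0 : ℝ), Tendsto (fun x => L (t * x) / L x) atTop (nhds 1))
    (F : ℝ → ℝ) (hF : ∀ x, F x = (μ {ω | X 0 ω ≤ x}).toReal)
    (hFbar : ∀ x > (0 : ℝ), 1 - F x = x ^ (-α) * L x)
    (f : ℝ → ℝ) (hf : ∀ x, HasDerivAt F (f x) x)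
    (hf_mono : ∃ x₁ : ℝ, AntitoneOn f (Set.Ici x₁))
    (a : ℕ → ℝ) (ha : ∀ n, a n = sInf {x : ℝ | 1 - 1 / (n : ℝ) ≤ F x}) :
    ∀ β > (0 : ℝ),
      Tendsto (fun n : ℕ =>
          Real.log (μ {ω | a n * (n : ℝ) ^ β < ⨆ i : Fin n, X i ω}).toReal / Real.log n)
        atTop (nhds (-(α * β))) :=
  stmt_17_general μ X hX_indep hX_ident L α hL_pos hL_slow F hF hFbar a ha
end

section
/- Let F̄ be regularly varying of index -α, α > 0, a_n = F^{←}(1-1/n), and M > 1. Then there exists a sequence ε_n ↓ 0 such that for all sufficiently large n and all x ∈ [1, M], ((1-ε_n)/n) x^{-(log n)(α+ε_n)/α} ≤ F̄(a_n x^{(log n)/α}) ≤ ((1+ε_n)/n) x^{-(log n)(α-ε_n)/α}. -/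
/-!
Potter bounds: for `F̄` antitone and regularly varying of index `-α`, and any `δ > 0`,
`(1 - δ) y^{-(α+δ)} F̄(x) ≤ F̄(xy) ≤ (1 + δ) y^{-(α-δ)} F̄(x)` for all large `x` and all `y ≥ 1`,
obtained by iterating the ratio limit at one point `c > 1` along the geometric grid `c^k x`.
At the quantile `x = a_n` one has `F̄(a_n) ~ 1/n`, because `F̄(s a_n) ≤ 1/n ≤ F̄(a_n / s)` for
`s > 1` and both ratios `F̄(s a_n) / F̄(a_n)` tend to `s^{∓α}`, which is close to `1`.
Taking `y = x^{(log n)/α}` gives the sandwich for each fixed `ε`, and a diagonal choice of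
`ε_n ↓ 0` finishes the proof.
-/

open Filter Topology

structure IsRegularlyVarying (G : ℝ → ℝ) (ρ : ℝ) : Prop where
  pos : ∀ x > 0, 0 < G x
  tendsto_div : ∀ t > 0, Tendsto (fun x => G (t * x) / G x) atTop (𝓝 (t ^ ρ))

/-- The quantile `F^←(1 - t)` of a distribution function `F`, in terms of its tail `G = 1 - F`. -/
noncomputable def tailQuantile (G : ℝ → ℝ) (t : ℝ) : ℝ := sInf {x | G x ≤ t}

namespace IsRegularlyVarying

variable {G L : ℝ → ℝ} {ρ α : ℝ}

theorem of_eq_rpow_mul (hL_pos : ∀ x > 0, 0 < L x)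
    (hL : ∀ t > 0, Tendsto (fun x => L (t * x) / L x) atTop (𝓝 1))
    (hG : ∀ x > 0, G x = x ^ ρ * L x) : IsRegularlyVarying G ρ where
  pos x hx := by
    rw [hG x hx]
    exact mul_pos (Real.rpow_pos_of_pos hx _) (hL_pos x hx)
  tendsto_div t ht := by
    have hlim := (hL t ht).const_mul (t ^ ρ)
    rw [mul_one] at hlim
    refine hlim.congr' ?_
    filter_upwards [eventually_gt_atTop 0] with x hx
    have hxρ := (Real.rpow_pos_of_pos hx ρ).ne'
    have hLx := (hL_pos x hx).ne'
    rw [hG _ (mul_pos ht hx), hG x hx, Real.mul_rpow ht.le hx.le]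
    field_simp

theorem tendsto_div_comp_mul (hG : IsRegularlyVarying G ρ) {s : ℝ} (hs : 0 < s) :
    Tendsto (fun x => G x / G (s * x)) atTop (𝓝 (s ^ (-ρ))) := by
  rw [Real.rpow_neg hs.le]
  simpa only [inv_div] using (hG.tendsto_div s hs).inv₀ (Real.rpow_pos_of_pos hs ρ).ne'

/-- If the limit `ℓ` of `G` were positive, `G (2x) / G x` would tend to `1 ≠ 2 ^ (-α)`. -/
theorem tendsto_atTop_zero (hG : IsRegularlyVarying G (-α)) (hanti : Antitone G)
    (hα : 0 < α) : Tendsto G atTop (𝓝 0) := by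
  have hnonneg : ∀ x, 0 ≤ G x := fun x =>
    (hG.pos _ (lt_max_of_lt_right one_pos)).le.trans (hanti (le_max_left x 1))
  have hℓ := tendsto_atTop_ciInf hanti ⟨0, Set.forall_mem_range.2 hnonneg⟩
  rcases eq_or_ne (⨅ x, G x) 0 with h | h
  · rwa [h] at hℓ
  have h2 := (hℓ.comp (tendsto_id.const_mul_atTop two_pos)).div hℓ h
  rw [div_self h] at h2
  exact absurd (tendsto_nhds_unique (hG.tendsto_div 2 two_pos) h2)
    (Real.rpow_lt_one_of_one_lt_of_neg one_lt_two (neg_lt_zero.2 hα)).ne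

end IsRegularlyVarying

section Potter

variable {G : ℝ → ℝ} {c p X : ℝ}

theorem pow_mul_le_apply_pow_mul (hc : 1 ≤ c) (hX : 0 ≤ X) (hp : 0 ≤ p)
    (h : ∀ x ≥ X, p * G x ≤ G (c * x)) (k : ℕ) {x : ℝ} (hx : X ≤ x) :
    p ^ k * G x ≤ G (c ^ k * x) := by
  induction k with
  | zero => simp
  | succ k ih =>
    have hck : X ≤ c ^ k * x := hx.trans (le_mul_of_one_le_left (hX.trans hx) (one_le_pow₀ hc))
    calc p ^ (k + 1) * G x = p * (p ^ k * G x) := by ring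
      _ ≤ p * G (c ^ k * x) := mul_le_mul_of_nonneg_left ih hp
      _ ≤ G (c * (c ^ k * x)) := h _ hck
      _ = G (c ^ (k + 1) * x) := by rw [pow_succ', mul_assoc]

theorem apply_pow_mul_le_pow_mul (hc : 1 ≤ c) (hX : 0 ≤ X) (hp : 0 ≤ p)
    (h : ∀ x ≥ X, G (c * x) ≤ p * G x) (k : ℕ) {x : ℝ} (hx : X ≤ x) :
    G (c ^ k * x) ≤ p ^ k * G x := by
  simpa [mul_neg] using
    pow_mul_le_apply_pow_mul (G := fun x => -G x) hc hX hp (fun x hx => by simpa using h x hx) k hx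

theorem rpow_neg_sub_le {u y α δ : ℝ} (hu : 0 < u) (huy : u ≤ y) (hyc : y ≤ c * u)
    (hα : 0 ≤ α) (hδ : 0 ≤ δ) : u ^ (-(α - δ)) ≤ c ^ α * y ^ (-(α - δ)) := by
  have hy : 0 < y := hu.trans_le huy
  have hc : 0 < c := pos_of_mul_pos_left (hy.trans_le hyc) hu.le
  calc u ^ (-(α - δ)) = u ^ (-α) * u ^ δ := by rw [← Real.rpow_add hu]; ring_nf
    _ ≤ (y / c) ^ (-α) * y ^ δ := by
      have hyc' : y / c ≤ u := div_le_of_le_mul₀ hc.le hu.le (by linarith [mul_comm c u])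
      exact mul_le_mul (Real.rpow_le_rpow_of_nonpos (div_pos hy hc) hyc' (neg_nonpos.2 hα))
        (Real.rpow_le_rpow hu.le huy hδ) (by positivity) (by positivity)
    _ = c ^ α * y ^ (-(α - δ)) := by
      rw [Real.div_rpow hy.le hc.le, Real.rpow_neg hc.le α, div_inv_eq_mul,
        show -(α - δ) = -α + δ by ring, Real.rpow_add hy]
      ring

theorem potter_of_step {α δ : ℝ} (hanti : Antitone G) (hG0 : ∀ x ≥ X, 0 ≤ G x) (hX : 0 ≤ X)
    (hc : 1 < c) (hα : 0 ≤ α) (hδ : 0 ≤ δ)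
    (hstep : ∀ x ≥ X, c ^ (-(α + δ)) * G x ≤ G (c * x) ∧ G (c * x) ≤ c ^ (-(α - δ)) * G x)
    {x y : ℝ} (hx : X ≤ x) (hy : 1 ≤ y) :
    c ^ (-(α + δ)) * y ^ (-(α + δ)) * G x ≤ G (x * y) ∧
      G (x * y) ≤ c ^ α * y ^ (-(α - δ)) * G x := by
  obtain ⟨k, hky, hyk⟩ := exists_nat_pow_near hy hc
  have hc0 : 0 < c := one_pos.trans hc
  have hx0 : 0 ≤ x := hX.trans hx
  rw [pow_succ'] at hyk
  constructor
  · calc c ^ (-(α + δ)) * y ^ (-(α + δ)) * G x = (c * y) ^ (-(α + δ)) * G x := by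
          rw [Real.mul_rpow hc0.le (zero_le_one.trans hy)]
      _ ≤ (c * c ^ k) ^ (-(α + δ)) * G x := mul_le_mul_of_nonneg_right
          (Real.rpow_le_rpow_of_nonpos (by positivity) (mul_le_mul_of_nonneg_left hky hc0.le)
            (by linarith))
          (hG0 x hx)
      _ = (c ^ (-(α + δ))) ^ (k + 1) * G x := by rw [← pow_succ', Real.rpow_pow_comm hc0.le]
      _ ≤ G (c ^ (k + 1) * x) := pow_mul_le_apply_pow_mul hc.le hX (by positivity)
          (fun x hx => (hstep x hx).1) (k + 1) hx
      _ ≤ G (x * y) := hanti <| by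
          rw [pow_succ', mul_comm x y]
          exact mul_le_mul_of_nonneg_right hyk.le hx0
  · calc G (x * y) ≤ G (c ^ k * x) := hanti <| by
          rw [mul_comm x y]
          exact mul_le_mul_of_nonneg_right hky hx0
      _ ≤ (c ^ (-(α - δ))) ^ k * G x := apply_pow_mul_le_pow_mul hc.le hX (by positivity)
          (fun x hx => (hstep x hx).2) k hx
      _ = (c ^ k) ^ (-(α - δ)) * G x := by rw [Real.rpow_pow_comm hc0.le]
      _ ≤ c ^ α * y ^ (-(α - δ)) * G x := mul_le_mul_of_nonneg_right
          (rpow_neg_sub_le (pow_pos hc0 k) hky hyk.le hα hδ) (hG0 x hx)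

theorem IsRegularlyVarying.potter {α δ : ℝ} (hG : IsRegularlyVarying G (-α)) (hanti : Antitone G)
    (hα : 0 ≤ α) (hδ : 0 < δ) :
    ∃ X, ∀ x ≥ X, ∀ y ≥ 1, (1 - δ) * y ^ (-(α + δ)) * G x ≤ G (x * y) ∧
      G (x * y) ≤ (1 + δ) * y ^ (-(α - δ)) * G x := by
  -- this choice of `c` makes `1 - δ ≤ c ^ (-(α + δ))` and `c ^ α ≤ 1 + δ`
  obtain ⟨c, hc, hcpow⟩ : ∃ c, 1 < c ∧ c ^ (α + δ) = 1 + δ :=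
    ⟨(1 + δ) ^ (α + δ)⁻¹, Real.one_lt_rpow (by linarith) (by positivity),
      Real.rpow_inv_rpow (by linarith) (by positivity : (0 : ℝ) < α + δ).ne'⟩
  have hc0 : 0 < c := one_pos.trans hc
  have hratio : ∀ᶠ x in atTop, G (c * x) / G x ∈ Set.Ioo (c ^ (-(α + δ))) (c ^ (-(α - δ))) :=
    hG.tendsto_div c hc0 <| Ioo_mem_nhds (Real.rpow_lt_rpow_of_exponent_lt hc (by linarith))
      (Real.rpow_lt_rpow_of_exponent_lt hc (by linarith))
  obtain ⟨X, hX⟩ := (hratio.and (eventually_gt_atTop 0)).exists_forall_of_atTop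
  have hGX : ∀ x ≥ X, 0 < G x := fun x hx => hG.pos x (hX x hx).2
  have hstep : ∀ x ≥ X, c ^ (-(α + δ)) * G x ≤ G (c * x) ∧ G (c * x) ≤ c ^ (-(α - δ)) * G x :=
    fun x hx => ⟨((lt_div_iff₀ (hGX x hx)).1 (hX x hx).1.1).le,
      ((div_lt_iff₀ (hGX x hx)).1 (hX x hx).1.2).le⟩
  refine ⟨X, fun x hx y hy => ?_⟩
  obtain ⟨hlo, hup⟩ := potter_of_step hanti (fun x hx => (hGX x hx).le) (hX X le_rfl).2.le hc hα
    hδ.le hstep hx hy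
  have hGx := (hGX x hx).le
  constructor
  · refine le_trans ?_ hlo
    have h1δ : 1 - δ ≤ c ^ (-(α + δ)) := by
      rw [Real.rpow_neg hc0.le, hcpow, ← one_div, le_div_iff₀ (by positivity)]
      nlinarith
    gcongr
  · refine hup.trans ?_
    have hcα : c ^ α ≤ 1 + δ := hcpow ▸ Real.rpow_le_rpow_of_exponent_le hc.le (by linarith)
    gcongr

end Potter

section TailQuantile

variable {G : ℝ → ℝ} {t z K : ℝ}

theorem mem_lowerBounds_of_lt_apply (hanti : Antitone G) (hK : t < G K) :
    K ∈ lowerBounds {x | G x ≤ t} :=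
  fun _ hz => le_of_not_gt fun h => ((hanti h.le).trans hz).not_gt hK

theorem lt_apply_of_lt_tailQuantile (hbdd : BddBelow {x | G x ≤ t})
    (hz : z < tailQuantile G t) : t < G z :=
  lt_of_not_ge fun h => hz.not_ge (csInf_le hbdd h)

theorem apply_le_of_tailQuantile_lt (hanti : Antitone G) (hne : {x | G x ≤ t}.Nonempty)
    (hz : tailQuantile G t < z) : G z ≤ t :=
  let ⟨_, hw, hwz⟩ := exists_lt_of_csInf_lt hne hz
  (hanti hwz.le).trans hw

theorem nonempty_setOf_apply_le (hzero : Tendsto G atTop (𝓝 0)) (ht : 0 < t) :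
    {x | G x ≤ t}.Nonempty :=
  (hzero.eventually_le_const ht).exists

theorem tendsto_tailQuantile (hanti : Antitone G) (hpos : ∀ x > 0, 0 < G x)
    (hzero : Tendsto G atTop (𝓝 0)) : Tendsto (tailQuantile G) (𝓝[>] 0) atTop := by
  refine tendsto_atTop.2 fun K => ?_
  have hK : 0 < G (max K 1) := hpos _ (lt_max_of_lt_right one_pos)
  filter_upwards [eventually_nhdsWithin_of_eventually_nhds (eventually_lt_nhds hK),
    self_mem_nhdsWithin] with t htK ht
  exact (le_max_left K 1).trans
    (le_csInf (nonempty_setOf_apply_le hzero ht) (mem_lowerBounds_of_lt_apply hanti htK))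

theorem tendsto_apply_tailQuantile_div {ρ : ℝ} (hG : IsRegularlyVarying G ρ) (hanti : Antitone G)
    (hzero : Tendsto G atTop (𝓝 0)) :
    Tendsto (fun t => G (tailQuantile G t) / t) (𝓝[>] 0) (𝓝 1) := by
  have hQ := tendsto_tailQuantile hanti hG.pos hzero
  have hcont : Tendsto (fun s : ℝ => s ^ (-ρ)) (𝓝 1) (𝓝 1) := by
    simpa using (Real.continuousAt_rpow_const 1 (-ρ) (Or.inl one_ne_zero)).tendsto
  have hQpos := hQ.eventually_gt_atTop 0
  have ht : ∀ᶠ t in 𝓝[>] (0 : ℝ), 0 < t := self_mem_nhdsWithin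
  rw [tendsto_order]
  refine ⟨fun b hb => ?_, fun b hb => ?_⟩
  · obtain ⟨s, hbs, hs0, hs1⟩ := (((hcont.mono_left nhdsWithin_le_nhds).eventually
      (lt_mem_nhds hb)).and (Ioo_mem_nhdsLT zero_lt_one)).exists
    have hbdd : ∀ᶠ t in 𝓝[>] (0 : ℝ), BddBelow {x | G x ≤ t} :=
      (eventually_nhdsWithin_of_eventually_nhds (eventually_lt_nhds (hG.pos 1 one_pos))).mono
        fun t ht => ⟨1, mem_lowerBounds_of_lt_apply hanti ht⟩
    filter_upwards [((hG.tendsto_div_comp_mul hs0).comp hQ).eventually (lt_mem_nhds hbs),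
      hQpos, ht, hbdd] with t hlim hQt ht hbdd
    have hlt : t < G (s * tailQuantile G t) :=
      lt_apply_of_lt_tailQuantile hbdd (mul_lt_of_lt_one_left hQt hs1)
    exact hlim.trans_le (div_le_div_of_nonneg_left (hG.pos _ hQt).le ht hlt.le)
  · obtain ⟨s, hsb, hs1⟩ := (((hcont.mono_left nhdsWithin_le_nhds).eventually
      (gt_mem_nhds hb)).and (self_mem_nhdsWithin : Set.Ioi (1 : ℝ) ∈ 𝓝[>] 1)).exists
    have hs0 : (0 : ℝ) < s := one_pos.trans hs1
    filter_upwards [((hG.tendsto_div_comp_mul hs0).comp hQ).eventually (gt_mem_nhds hsb),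
      hQpos, ht] with t hlim hQt ht
    have hle : G (s * tailQuantile G t) ≤ t := apply_le_of_tailQuantile_lt hanti
      (nonempty_setOf_apply_le hzero ht) (lt_mul_of_one_lt_left hQt hs1)
    exact (div_le_div_of_nonneg_left (hG.pos _ hQt).le (hG.pos _ (by positivity)) hle).trans_lt
      hlim

end TailQuantile

section Sandwich

variable {G : ℝ → ℝ} {α ε : ℝ}

theorem eventually_apply_tailQuantile_mul_mem (hG : IsRegularlyVarying G (-α))
    (hanti : Antitone G) (hα : 0 < α) (hε : 0 < ε) :
    ∀ᶠ t in 𝓝[>] 0, ∀ y ≥ 1,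
      (1 - ε) * t * y ^ (-(α + ε)) ≤ G (tailQuantile G t * y) ∧
        G (tailQuantile G t * y) ≤ (1 + ε) * t * y ^ (-(α - ε)) := by
  set δ := min (ε / 3) (1 / 2)
  have hδ0 : 0 < δ := lt_min (by positivity) (by norm_num)
  have hδε : δ ≤ ε / 3 := min_le_left _ _
  have hδ1 : δ ≤ 1 / 2 := min_le_right _ _
  obtain ⟨X, hX⟩ := hG.potter hanti hα.le hδ0
  have hzero := hG.tendsto_atTop_zero hanti hα
  have hratio := (tendsto_apply_tailQuantile_div hG hanti hzero).eventually
    (Ioo_mem_nhds (show 1 - δ < 1 by linarith) (show 1 < 1 + δ by linarith))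
  filter_upwards [hratio, (tendsto_tailQuantile hanti hG.pos hzero).eventually_ge_atTop X,
    self_mem_nhdsWithin] with t ⟨hlo, hup⟩ hXt (ht : 0 < t) y hy
  rw [lt_div_iff₀ ht] at hlo
  rw [div_lt_iff₀ ht] at hup
  obtain ⟨hPlo, hPup⟩ := hX _ hXt y hy
  have hy0 : 0 < y := zero_lt_one.trans_le hy
  constructor
  · calc (1 - ε) * t * y ^ (-(α + ε)) ≤ (1 - δ) ^ 2 * t * y ^ (-(α + ε)) := by
          gcongr
          nlinarith
      _ ≤ (1 - δ) ^ 2 * t * y ^ (-(α + δ)) := by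
          gcongr
          linarith
      _ = (1 - δ) * y ^ (-(α + δ)) * ((1 - δ) * t) := by ring
      _ ≤ (1 - δ) * y ^ (-(α + δ)) * G (tailQuantile G t) :=
          mul_le_mul_of_nonneg_left hlo.le (mul_nonneg (by linarith) (by positivity))
      _ ≤ G (tailQuantile G t * y) := hPlo
  · calc G (tailQuantile G t * y) ≤ (1 + δ) * y ^ (-(α - δ)) * G (tailQuantile G t) := hPup
      _ ≤ (1 + δ) * y ^ (-(α - δ)) * ((1 + δ) * t) := by gcongr
      _ = (1 + δ) ^ 2 * t * y ^ (-(α - δ)) := by ring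
      _ ≤ (1 + ε) * t * y ^ (-(α - ε)) := by
          gcongr
          · nlinarith
          · linarith

theorem eventually_apply_tailQuantile_mul_rpow_log_mem (hG : IsRegularlyVarying G (-α))
    (hanti : Antitone G) (hα : 0 < α) (hε : 0 < ε) :
    ∀ᶠ n : ℕ in atTop, ∀ x ≥ 1,
      (1 - ε) / n * x ^ (-(Real.log n * (α + ε) / α))
          ≤ G (tailQuantile G (1 / n) * x ^ (Real.log n / α)) ∧
        G (tailQuantile G (1 / n) * x ^ (Real.log n / α))
          ≤ (1 + ε) / n * x ^ (-(Real.log n * (α - ε) / α)) := by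
  have hinv : Tendsto (fun n : ℕ => 1 / (n : ℝ)) atTop (𝓝[>] 0) := by
    simpa only [one_div, Function.comp_def] using
      tendsto_inv_atTop_nhdsGT_zero.comp tendsto_natCast_atTop_atTop
  filter_upwards [hinv.eventually (eventually_apply_tailQuantile_mul_mem hG hanti hα hε)]
    with n hn x hx
  have hexp : ∀ β, (x ^ (Real.log n / α)) ^ (-β) = x ^ (-(Real.log n * β / α)) := fun β => by
    rw [← Real.rpow_mul (zero_le_one.trans hx)]
    ring_nf
  have := hn _ (Real.one_le_rpow hx (div_nonneg (Real.log_natCast_nonneg n) hα.le))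
  simpa only [hexp, mul_one_div] using this

end Sandwich

theorem exists_antitone_tendsto_zero_eventually {P : ℕ → ℝ → Prop}
    (h : ∀ ε > 0, ∀ᶠ n in atTop, P n ε) :
    ∃ ε : ℕ → ℝ, (∀ n, 0 < ε n) ∧ Antitone ε ∧ Tendsto ε atTop (𝓝 0) ∧
      ∀ᶠ n in atTop, P n (ε n) := by
  classical
  choose N hN using fun k : ℕ => eventually_atTop.1 (h (1 / (k + 1)) Nat.one_div_pos_of_nat)
  -- `K n` is the largest `k ≤ n` whose threshold `N k` has been reached by `n`
  set K : ℕ → ℕ := fun n => Nat.findGreatest (fun k => N k ≤ n) n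
  have hK : Monotone K := fun m n hmn => Nat.findGreatest_mono (fun k hk => hk.trans hmn) hmn
  have hKtop : Tendsto K atTop atTop := tendsto_atTop_atTop.2 fun b =>
    ⟨max b (N b), fun n hn => Nat.le_findGreatest (le_of_max_le_left hn) (le_of_max_le_right hn)⟩
  refine ⟨fun n => 1 / (K n + 1), fun n => Nat.one_div_pos_of_nat,
    fun m n hmn => Nat.one_div_le_one_div (hK hmn),
    tendsto_one_div_add_atTop_nhds_zero_nat.comp hKtop, ?_⟩
  filter_upwards [eventually_ge_atTop (N 0)] with n hn
  exact hN _ n (Nat.findGreatest_spec (P := fun k => N k ≤ n) (Nat.zero_le n) hn)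

theorem stmt_18_general (F L : ℝ → ℝ) (α M : ℝ) (hα : 0 < α)
    (hF_mono : Monotone F)
    (hL_pos : ∀ x > (0 : ℝ), 0 < L x)
    (hL_slow : ∀ t > (0 : ℝ), Tendsto (fun x => L (t * x) / L x) atTop (nhds 1))
    (hFbar : ∀ x > (0 : ℝ), 1 - F x = x ^ (-α) * L x)
    (a : ℕ → ℝ) (ha : ∀ n, a n = sInf {x : ℝ | 1 - 1 / (n : ℝ) ≤ F x}) :
    ∃ ε : ℕ → ℝ, (∀ n, 0 < ε n) ∧ Antitone ε ∧ Tendsto ε atTop (nhds 0) ∧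
      ∀ᶠ n : ℕ in atTop, ∀ x ∈ Set.Icc (1 : ℝ) M,
        (1 - ε n) / n * x ^ (-(Real.log n * (α + ε n) / α))
            ≤ 1 - F (a n * x ^ (Real.log n / α)) ∧
        1 - F (a n * x ^ (Real.log n / α))
            ≤ (1 + ε n) / n * x ^ (-(Real.log n * (α - ε n) / α)) := by
  set G : ℝ → ℝ := fun x => 1 - F x
  have hanti : Antitone G := fun _ _ h => sub_le_sub_left (hF_mono h) 1
  have hG : IsRegularlyVarying G (-α) := .of_eq_rpow_mul hL_pos hL_slow hFbar
  have ha' : a = fun n : ℕ => tailQuantile G (1 / (n : ℝ)) :=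
    funext fun n => (ha n).trans <| congrArg sInf <| Set.ext fun x => by
      simp only [Set.mem_ofPred_eq, G, sub_le_comm]
  subst ha'
  obtain ⟨ε, hε0, hεanti, hεlim, hε⟩ := exists_antitone_tendsto_zero_eventually
    fun ε hε => eventually_apply_tailQuantile_mul_rpow_log_mem hG hanti hα hε
  exact ⟨ε, hε0, hεanti, hεlim, hε.mono fun n hn x hx => hn x hx.1⟩

theorem stmt_18 (F L : ℝ → ℝ) (α M : ℝ) (hα : 0 < α) (hM : 1 < M)
    (hF_mono : Monotone F) (hF0 : ∀ x, 0 ≤ F x) (hF1 : ∀ x, F x ≤ 1)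
    (hL_pos : ∀ x > (0 : ℝ), 0 < L x)
    (hL_slow : ∀ t > (0 : ℝ), Tendsto (fun x => L (t * x) / L x) atTop (nhds 1))
    (hFbar : ∀ x > (0 : ℝ), 1 - F x = x ^ (-α) * L x)
    (a : ℕ → ℝ) (ha : ∀ n, a n = sInf {x : ℝ | 1 - 1 / (n : ℝ) ≤ F x}) :
    ∃ ε : ℕ → ℝ, (∀ n, 0 < ε n) ∧ Antitone ε ∧ Tendsto ε atTop (nhds 0) ∧
      ∀ᶠ n : ℕ in atTop, ∀ x ∈ Set.Icc (1 : ℝ) M,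
        (1 - ε n) / n * x ^ (-(Real.log n * (α + ε n) / α))
            ≤ 1 - F (a n * x ^ (Real.log n / α)) ∧
        1 - F (a n * x ^ (Real.log n / α))
            ≤ (1 + ε n) / n * x ^ (-(Real.log n * (α - ε n) / α)) :=
  stmt_18_general F L α M hα hF_mono hL_pos hL_slow hFbar a ha
end
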